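/- arXiv:1801.03197 — 7 statements merged into one kernel-verified Lean document; each statement's English description precedes it below -/
import Mathlib

section
/- Let a ∈ (0,∞], and let u, v be nonnegative measurable functions on (0,a) with v > 0. If A₁ := sup_{0<t<a} (∫_t^a u(s) ds)(∫₀^t v(s)^{-1} ds) < ∞, then for every measurable f on (0,a): ∫₀^a |∫₀^s f(t) dt|² u(s) ds ≤ 4 A₁ ∫₀^a |f(s)|² v(s) ds. -/
/-!
Write `W(t) = ∫₀ᵗ 1/v`. Cauchy–Schwarz against the weights `v √W` and `1/(v √W)` gives
`|∫₀ˢ f|² ≤ 2 √W(s) ∫₀ˢ f² v √W`, because `∫₀ˢ 1/(v √W) ≤ 2 √W(s)`. Integrating against `u`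
and exchanging the order of integration reduces the claim to `∫ₜᵃ u √W ≤ 2 A₁ / √W(t)`, which
follows from `(∫ₜᵃ u) W(t) ≤ A₁`. Both one-dimensional estimates are instances of the
weak-type bound `μ {φ > λ} ≤ min(c, d / λ²) ⟹ ∫ φ dμ ≤ 2 √(c d)`, the distribution estimate
coming from the monotonicity of `W` and of the tails of `u` and from the absence of atoms.
Where `W = ∞` the Muckenhoupt condition forces `u = 0` a.e., so that part contributes nothing.
-/

open MeasureTheory Set
open scoped ENNReal

section NullSingleton

variable {α : Type*} [LinearOrder α] [TopologicalSpace α] [OrderTopology α]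
  [SecondCountableTopology α] [MeasurableSpace α] {μ : Measure α} [NullSingletonClass μ]
  {S R : Set α} {c : ℝ≥0∞}

theorem measure_le_of_forall_measure_Ioi_inter_le (hSR : S ⊆ R)
    (h : ∀ x ∈ S, μ (Ioi x ∩ R) ≤ c) : μ S ≤ c := by
  obtain ⟨T, hTS, hT, hTU⟩ :=
    TopologicalSpace.isOpen_biUnion_countable S Ioi fun x _ => isOpen_Ioi
  have hleast : (S \ ⋃ x ∈ S, Ioi x).Subsingleton := by
    intro x hx y hy
    by_contra hxy
    rcases lt_or_gt_of_ne hxy with hlt | hlt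
    · exact hy.2 (mem_biUnion hx.1 hlt)
    · exact hx.2 (mem_biUnion hy.1 hlt)
  have hdir : DirectedOn (Function.onFun (· ⊆ ·) fun x => Ioi x ∩ R) T := fun x hx y hy =>
    ⟨min x y, by rcases min_choice x y with h | h <;> rw [h] <;> assumption,
      inter_subset_inter_left _ (Ioi_subset_Ioi (min_le_left x y)),
      inter_subset_inter_left _ (Ioi_subset_Ioi (min_le_right x y))⟩
  calc μ S ≤ μ ((⋃ x ∈ T, Ioi x ∩ R) ∪ (S \ ⋃ x ∈ S, Ioi x)) := by
        refine measure_mono fun x hx => ?_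
        by_cases hxU : x ∈ ⋃ x ∈ S, Ioi x
        · rw [← hTU] at hxU
          obtain ⟨y, hy, hxy⟩ := mem_iUnion₂.1 hxU
          exact Or.inl (mem_biUnion hy ⟨hxy, hSR hx⟩)
        · exact Or.inr ⟨hx, hxU⟩
    _ ≤ μ (⋃ x ∈ T, Ioi x ∩ R) :=
        (measure_union_le _ _).trans_eq (by rw [hleast.measure_zero μ, add_zero])
    _ = ⨆ x ∈ T, μ (Ioi x ∩ R) := measure_biUnion_eq_iSup hT hdir
    _ ≤ c := iSup₂_le fun x hx => h x (hTS hx)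

theorem measure_le_of_forall_measure_Iio_inter_le (hSR : S ⊆ R)
    (h : ∀ x ∈ S, μ (Iio x ∩ R) ≤ c) : μ S ≤ c :=
  have : NullSingletonClass (α := αᵒᵈ) μ := ‹_›
  measure_le_of_forall_measure_Ioi_inter_le (α := αᵒᵈ) hSR h

end NullSingleton

theorem lintegral_Ioi_ofReal_inv_sq {c : ℝ} (hc : 0 < c) :
    ∫⁻ x in Ioi c, ENNReal.ofReal (x ^ 2)⁻¹ = ENNReal.ofReal c⁻¹ := by
  have hrpow : EqOn (fun x : ℝ => (x ^ 2)⁻¹) (fun x => x ^ (-2 : ℝ)) (Ioi c) := fun x hx => by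
    simp [Real.rpow_neg (hc.trans hx).le]
  rw [setLIntegral_congr_fun measurableSet_Ioi fun x hx => congrArg ENNReal.ofReal (hrpow hx),
    ← ofReal_integral_eq_lintegral_ofReal (integrableOn_Ioi_rpow_of_lt (by norm_num) hc)
      ((ae_restrict_iff' measurableSet_Ioi).2 (ae_of_all _ fun x hx =>
        Real.rpow_nonneg (hc.trans hx).le _)),
    integral_Ioi_rpow_of_lt (by norm_num) hc]
  norm_num [Real.rpow_neg_one]

theorem lintegral_ofReal_le_two_mul_sqrt {α : Type*} [MeasurableSpace α] {μ : Measure α}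
    {φ : α → ℝ} (hφ0 : 0 ≤ᵐ[μ] φ) (hφ : AEMeasurable φ μ) {c d : ℝ} (hc : 0 ≤ c)
    (hd : 0 ≤ d)
    (hμc : ∀ t > 0, μ {x | t < φ x} ≤ ENNReal.ofReal c)
    (hμd : ∀ t > 0, μ {x | t < φ x} ≤ ENNReal.ofReal (d / t ^ 2)) :
    ∫⁻ x, ENNReal.ofReal (φ x) ∂μ ≤ ENNReal.ofReal (2 * √(c * d)) := by
  rw [lintegral_eq_lintegral_meas_lt μ hφ0 hφ]
  by_cases hcd : c = 0 ∨ d = 0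
  · have hnull : ∀ t ∈ Ioi (0 : ℝ), μ {x | t < φ x} ≤ 0 := by
      intro t ht
      rcases hcd with rfl | rfl
      · simpa using hμc t ht
      · simpa using hμd t ht
    exact (setLIntegral_mono' measurableSet_Ioi hnull).trans (by simp)
  push Not at hcd
  have hc₀ : 0 < √c := Real.sqrt_pos.2 (hc.lt_of_ne' hcd.1)
  have hd₀ : 0 < √d := Real.sqrt_pos.2 (hd.lt_of_ne' hcd.2)
  -- the split point `t₀` balances the two bounds: `c * t₀ = d / t₀`
  obtain ⟨t₀, ht₀⟩ : ∃ t₀, t₀ = √d / √c := ⟨_, rfl⟩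
  have ht₀pos : 0 < t₀ := ht₀ ▸ div_pos hd₀ hc₀
  rw [← Ioc_union_Ioi_eq_Ioi ht₀pos.le]
  calc ∫⁻ t in Ioc 0 t₀ ∪ Ioi t₀, μ {x | t < φ x}
      ≤ (∫⁻ _ in Ioc 0 t₀, ENNReal.ofReal c)
        + ∫⁻ t in Ioi t₀, ENNReal.ofReal d * ENNReal.ofReal (t ^ 2)⁻¹ := by
        refine (lintegral_union_le _ _ _).trans ?_
        gcongr ?_ + ?_
        · exact setLIntegral_mono' measurableSet_Ioc fun t ht => hμc t ht.1
        · refine setLIntegral_mono' measurableSet_Ioi fun t ht => ?_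
          rw [← ENNReal.ofReal_mul hd]
          exact hμd t (ht₀pos.trans ht)
    _ = ENNReal.ofReal (c * t₀ + d * t₀⁻¹) := by
        rw [setLIntegral_const, Real.volume_Ioc, sub_zero,
          lintegral_const_mul' _ _ ENNReal.ofReal_ne_top, lintegral_Ioi_ofReal_inv_sq ht₀pos,
          ← ENNReal.ofReal_mul hc, ← ENNReal.ofReal_mul hd,
          ← ENNReal.ofReal_add (by positivity) (by positivity)]
    _ = ENNReal.ofReal (2 * √(c * d)) := by
        rw [ht₀, Real.sqrt_mul hc]
        congr 1
        field_simp
        rw [Real.sq_sqrt hc, Real.sq_sqrt hd]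
        ring

theorem le_ofReal_div_of_mul_le {x : ℝ≥0∞} {A w : ℝ} (hw : 0 < w)
    (h : x * ENNReal.ofReal w ≤ ENNReal.ofReal A) : x ≤ ENNReal.ofReal (A / w) := by
  rw [ENNReal.ofReal_div_of_pos hw]
  exact (ENNReal.le_div_iff_mul_le (Or.inl (by simpa using hw))
    (Or.inl ENNReal.ofReal_ne_top)).2 h

theorem setLIntegral_inv_sqrt_measure_Ioo_le {μ : Measure ℝ} [NullSingletonClass μ] {a b : ℝ}
    (hb : μ (Ioo a b) ≠ ∞) :
    ∫⁻ t in Ioo a b, ENNReal.ofReal (√(μ (Ioo a t)).toReal)⁻¹ ∂μ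
      ≤ ENNReal.ofReal (2 * √(μ (Ioo a b)).toReal) := by
  have hmono : Monotone fun t => μ (Ioo a t) := fun t t' h => measure_mono (Ioo_subset_Ioo_right h)
  have hmeas : Measurable fun t => (√(μ (Ioo a t)).toReal)⁻¹ :=
    hmono.measurable.ennreal_toReal.sqrt.inv
  have hfin : ∀ t ≤ b, μ (Ioo a t) ≠ ∞ := fun t ht => ne_top_of_le_ne_top hb (hmono ht)
  rw [← mul_one (μ (Ioo a b)).toReal]
  refine lintegral_ofReal_le_two_mul_sqrt (ae_of_all _ fun t => by positivity)
    hmeas.aemeasurable ENNReal.toReal_nonneg zero_le_one (fun r _ => ?_) (fun r hr => ?_)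
  · exact (measure_mono (subset_univ _)).trans_eq
      (by rw [Measure.restrict_apply_univ, ENNReal.ofReal_toReal hb])
  · rw [Measure.restrict_apply (measurableSet_lt measurable_const hmeas)]
    refine measure_le_of_forall_measure_Iio_inter_le (R := Ioi a) (fun t ht => ht.2.1)
      fun t ht => ?_
    rw [Iio_inter_Ioi, ← ENNReal.ofReal_toReal (hfin t ht.2.2.le)]
    refine ENNReal.ofReal_le_ofReal ?_
    have hlt : r < (√(μ (Ioo a t)).toReal)⁻¹ := ht.1
    have hpos : 0 < √(μ (Ioo a t)).toReal := (Real.sqrt_nonneg _).lt_of_ne fun h => by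
      rw [← h, inv_zero] at hlt
      exact hr.not_gt hlt
    have := (lt_inv_comm₀ hr hpos).1 hlt
    rw [Real.sqrt_lt' (inv_pos.2 hr)] at this
    rw [one_div, ← inv_pow]
    exact this.le

theorem setLIntegral_sqrt_le_of_measure_Ioi_inter_mul_le {ν : Measure ℝ} [NullSingletonClass ν]
    {R : Set ℝ} {W : ℝ → ℝ} (hW : Measurable W) {A : ℝ} (hA : 0 ≤ A)
    (hR : ∀ r ∈ R, ν (Ioi r ∩ R) * ENNReal.ofReal (W r) ≤ ENNReal.ofReal A)
    {t : ℝ} (hWt : 0 < W t) (ht : ν (Ioi t ∩ R) * ENNReal.ofReal (W t) ≤ ENNReal.ofReal A) :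
    ∫⁻ s in Ioi t ∩ R, ENNReal.ofReal √(W s) ∂ν ≤ ENNReal.ofReal (2 * A / √(W t)) := by
  have hmeas : Measurable fun s => √(W s) := hW.sqrt
  have hsqrt : √(A / W t * A) = A / √(W t) := by
    rw [div_mul_eq_mul_div, Real.sqrt_div' _ hWt.le, Real.sqrt_mul_self hA]
  rw [mul_div_assoc, ← hsqrt]
  refine lintegral_ofReal_le_two_mul_sqrt (ae_of_all _ fun t => by positivity)
    hmeas.aemeasurable (div_nonneg hA hWt.le) hA (fun r _ => ?_) (fun r hr => ?_)
  · exact (measure_mono (subset_univ _)).trans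
      (by rw [Measure.restrict_apply_univ]; exact le_ofReal_div_of_mul_le hWt ht)
  · rw [Measure.restrict_apply (measurableSet_lt measurable_const hmeas)]
    refine measure_le_of_forall_measure_Ioi_inter_le (fun s hs => hs.2.2) fun s hs => ?_
    have hrs : r ^ 2 < W s := (Real.lt_sqrt hr.le).1 hs.1
    exact (le_ofReal_div_of_mul_le ((pow_pos hr 2).trans hrs) (hR s hs.2.2)).trans
      (ENNReal.ofReal_le_ofReal (div_le_div_of_nonneg_left hA (pow_pos hr 2) hrs.le))

theorem setLIntegral_mul_setLIntegral_Iio_inter {μ ν : Measure ℝ} [SFinite μ] [SFinite ν]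
    {E F : Set ℝ} {f g : ℝ → ℝ≥0∞} (hf : Measurable f) (hg : Measurable g) :
    ∫⁻ s in E, f s * ∫⁻ t in Iio s ∩ F, g t ∂ν ∂μ
      = ∫⁻ t in F, g t * ∫⁻ s in Ioi t ∩ E, f s ∂μ ∂ν := by
  have hsymm : ∀ s t, (Iio s).indicator (fun t => f s * g t) t
      = (Ioi t).indicator (fun s => g t * f s) s := fun s t => by
    simp only [indicator, mem_Iio, mem_Ioi, mul_comm]
  have hmeas :
      Measurable (Function.uncurry fun s t => (Iio s).indicator (fun t => f s * g t) t) :=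
    ((hf.comp measurable_fst).mul (hg.comp measurable_snd)).indicator
      (measurableSet_lt measurable_snd measurable_fst)
  calc ∫⁻ s in E, f s * ∫⁻ t in Iio s ∩ F, g t ∂ν ∂μ
      = ∫⁻ s in E, ∫⁻ t in F, (Iio s).indicator (fun t => f s * g t) t ∂ν ∂μ := by
        simp_rw [setLIntegral_indicator measurableSet_Iio, lintegral_const_mul _ hg]
    _ = ∫⁻ t in F, ∫⁻ s in E, (Ioi t).indicator (fun s => g t * f s) s ∂μ ∂ν := by
        simp_rw [← hsymm]
        exact lintegral_lintegral_swap hmeas.aemeasurable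
    _ = ∫⁻ t in F, g t * ∫⁻ s in Ioi t ∩ E, f s ∂μ ∂ν := by
        simp_rw [setLIntegral_indicator measurableSet_Ioi, lintegral_const_mul _ hf]

theorem lintegral_sq_le_mul_of_sq_le {α : Type*} [MeasurableSpace α] {μ : Measure α}
    {f g h : α → ℝ≥0∞} (hg : AEMeasurable g μ) (hh : AEMeasurable h μ)
    (hfgh : ∀ᵐ x ∂μ, f x ^ 2 ≤ g x * h x) :
    (∫⁻ x, f x ∂μ) ^ 2 ≤ (∫⁻ x, g x ∂μ) * ∫⁻ x, h x ∂μ := by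
  have hsq : ∀ x : ℝ≥0∞, (x ^ (1 / 2 : ℝ)) ^ (2 : ℝ) = x := fun x => by
    rw [← ENNReal.rpow_mul]; norm_num
  have hsqrt_sq : ∀ x : ℝ≥0∞, (x ^ 2) ^ (1 / 2 : ℝ) = x := fun x => by
    rw [← ENNReal.rpow_natCast, ← ENNReal.rpow_mul]; norm_num
  have hroot : ∀ᵐ x ∂μ, f x ≤ g x ^ (1 / 2 : ℝ) * h x ^ (1 / 2 : ℝ) := by
    filter_upwards [hfgh] with x hx
    rw [← ENNReal.mul_rpow_of_nonneg _ _ (by norm_num), ← hsqrt_sq (f x)]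
    exact ENNReal.rpow_le_rpow hx (by norm_num)
  have hholder := ENNReal.lintegral_mul_le_Lp_mul_Lq μ Real.HolderConjugate.two_two
    (hg.pow_const (1 / 2 : ℝ)) (hh.pow_const (1 / 2 : ℝ))
  simp only [Pi.mul_apply, hsq] at hholder
  calc (∫⁻ x, f x ∂μ) ^ 2
      ≤ ((∫⁻ x, g x ∂μ) ^ (1 / 2 : ℝ) * (∫⁻ x, h x ∂μ) ^ (1 / 2 : ℝ)) ^ 2 := by
        gcongr
        exact (lintegral_mono_ae hroot).trans hholder
    _ = (∫⁻ x, g x ∂μ) * ∫⁻ x, h x ∂μ := by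
        rw [mul_pow, ← ENNReal.rpow_natCast, ← ENNReal.rpow_natCast, Nat.cast_ofNat, hsq,
          hsq]

theorem ofReal_abs_intervalIntegral_le {f : ℝ → ℝ} {a b : ℝ} (hab : a ≤ b) :
    ENNReal.ofReal |∫ t in a..b, f t| ≤ ∫⁻ t in Ioo a b, ENNReal.ofReal |f t| := by
  simp_rw [intervalIntegral.integral_of_le hab, ← Real.enorm_eq_ofReal_abs,
    setLIntegral_congr Ioo_ae_eq_Ioc]
  exact enorm_integral_le_lintegral_enorm _

theorem setLIntegral_Ioo_ofReal_inv_pos {v : ℝ → ℝ} (hv : Measurable v) {t : ℝ} (ht : 0 < t)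
    (hv0 : ∀ r ∈ Ioo 0 t, 0 < v r) : 0 < ∫⁻ r in Ioo 0 t, ENNReal.ofReal (v r)⁻¹ := by
  rw [setLIntegral_pos_iff (f := fun r => ENNReal.ofReal (v r)⁻¹) hv.inv.ennreal_ofReal,
    inter_eq_right.2 fun r hr => by simpa using hv0 r hr, Real.volume_Ioo]
  simpa using ht

theorem ofReal_sq_intervalIntegral_le {f v : ℝ → ℝ} (hf : Measurable f) (hv : Measurable v)
    {s : ℝ} (hs : 0 ≤ s) (hv0 : ∀ t ∈ Ioo 0 s, 0 < v t)
    (hW : ∫⁻ r in Ioo 0 s, ENNReal.ofReal (v r)⁻¹ ≠ ∞) :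
    ENNReal.ofReal (|∫ t in 0..s, f t| ^ 2) ≤
      ENNReal.ofReal (2 * √(∫⁻ r in Ioo 0 s, ENNReal.ofReal (v r)⁻¹).toReal) *
        ∫⁻ t in Ioo 0 s, ENNReal.ofReal (|f t| ^ 2 * v t) *
          ENNReal.ofReal √(∫⁻ r in Ioo 0 t, ENNReal.ofReal (v r)⁻¹).toReal := by
  set ρ : ℝ → ℝ≥0∞ := fun r => ENNReal.ofReal (v r)⁻¹
  have hρ : Measurable ρ := hv.inv.ennreal_ofReal
  set μ := volume.withDensity ρ
  have hμ : ∀ t, ∫⁻ r in Ioo 0 t, ρ r = μ (Ioo 0 t) := fun t =>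
    (withDensity_apply _ measurableSet_Ioo).symm
  simp only [hμ] at hW ⊢
  set W := fun t => (μ (Ioo 0 t)).toReal
  have hmono : Monotone fun t => μ (Ioo 0 t) := fun t t' h => measure_mono (Ioo_subset_Ioo_right h)
  have hWmeas : Measurable W := hmono.measurable.ennreal_toReal
  have hWpos : ∀ t ∈ Ioo 0 s, 0 < W t := fun t ht => by
    refine ENNReal.toReal_pos ?_ (ne_top_of_le_ne_top hW (hmono ht.2.le))
    rw [← hμ]
    exact (setLIntegral_Ioo_ofReal_inv_pos hv ht.1 fun r hr => hv0 r ⟨hr.1, hr.2.trans ht.2⟩).ne'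
  have hprod : ∀ t ∈ Ioo 0 s, ENNReal.ofReal |f t| ^ 2 ≤
      ENNReal.ofReal (|f t| ^ 2 * v t) * ENNReal.ofReal √(W t) *
        (ρ t * ENNReal.ofReal (√(W t))⁻¹) := by
    intro t ht
    have hvt := hv0 t ht
    have hWt := Real.sqrt_pos.2 (hWpos t ht)
    rw [← ENNReal.ofReal_pow (abs_nonneg _), ← ENNReal.ofReal_mul (by positivity),
      ← ENNReal.ofReal_mul (by positivity), ← ENNReal.ofReal_mul (by positivity)]
    refine ENNReal.ofReal_le_ofReal (le_of_eq ?_)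
    field_simp
  calc ENNReal.ofReal (|∫ t in 0..s, f t| ^ 2)
      = ENNReal.ofReal |∫ t in 0..s, f t| ^ 2 := ENNReal.ofReal_pow (abs_nonneg _) 2
    _ ≤ (∫⁻ t in Ioo 0 s, ENNReal.ofReal |f t|) ^ 2 := by
        gcongr
        exact ofReal_abs_intervalIntegral_le hs
    _ ≤ (∫⁻ t in Ioo 0 s, ENNReal.ofReal (|f t| ^ 2 * v t) * ENNReal.ofReal √(W t)) *
          ∫⁻ t in Ioo 0 s, ρ t * ENNReal.ofReal (√(W t))⁻¹ :=
        lintegral_sq_le_mul_of_sq_le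
          (((hf.abs.pow_const 2).mul hv).ennreal_ofReal.mul hWmeas.sqrt.ennreal_ofReal).aemeasurable
          (hρ.mul hWmeas.sqrt.inv.ennreal_ofReal).aemeasurable
          (ae_restrict_of_forall_mem measurableSet_Ioo hprod)
    _ = (∫⁻ t in Ioo 0 s, ENNReal.ofReal (|f t| ^ 2 * v t) * ENNReal.ofReal √(W t)) *
          ∫⁻ t in Ioo 0 s, ENNReal.ofReal (√(W t))⁻¹ ∂μ := by
        rw [setLIntegral_withDensity_eq_setLIntegral_mul (g := fun t => ENNReal.ofReal (√(W t))⁻¹)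
          _ hρ hWmeas.sqrt.inv.ennreal_ofReal measurableSet_Ioo]
        rfl
    _ ≤ _ := by
        rw [mul_comm]
        gcongr
        exact setLIntegral_inv_sqrt_measure_Ioo_le hW

theorem lintegral_hardy_le_of_tail_bound_of_ne_top {f u v : ℝ → ℝ} (hf : Measurable f)
    (hu : Measurable u) (hv : Measurable v) {E : Set ℝ} (hE : MeasurableSet E)
    (hE0 : ∀ s ∈ E, 0 < s) (hEdown : ∀ s ∈ E, Ioo 0 s ⊆ E) (hv0 : ∀ s ∈ E, 0 < v s)
    (hWfin : ∀ s ∈ E, ∫⁻ r in Ioo 0 s, ENNReal.ofReal (v r)⁻¹ ≠ ∞) {A : ℝ} (hA : 0 ≤ A)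
    (htail : ∀ t ∈ E, (∫⁻ s in Ioi t ∩ E, ENNReal.ofReal (u s)) *
      ∫⁻ r in Ioo 0 t, ENNReal.ofReal (v r)⁻¹ ≤ ENNReal.ofReal A) :
    ∫⁻ s in E, ENNReal.ofReal (|∫ t in 0..s, f t| ^ 2 * u s)
      ≤ ENNReal.ofReal (4 * A) * ∫⁻ s in E, ENNReal.ofReal (|f s| ^ 2 * v s) := by
  set W := fun t => (∫⁻ r in Ioo 0 t, ENNReal.ofReal (v r)⁻¹).toReal
  have hWmeas : Measurable W :=
    (Monotone.measurable fun t t' h => lintegral_mono_set (Ioo_subset_Ioo_right h)).ennreal_toReal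
  have hv0' : ∀ s ∈ E, ∀ t ∈ Ioo 0 s, 0 < v t := fun s hs t ht => hv0 t (hEdown s hs ht)
  have hWpos : ∀ t ∈ E, 0 < W t := fun t ht =>
    ENNReal.toReal_pos (setLIntegral_Ioo_ofReal_inv_pos hv (hE0 t ht) (hv0' t ht)).ne' (hWfin t ht)
  have hΦ : Measurable fun s => ENNReal.ofReal (u s) * ENNReal.ofReal √(W s) :=
    hu.ennreal_ofReal.mul hWmeas.sqrt.ennreal_ofReal
  have hg : Measurable fun t => ENNReal.ofReal (|f t| ^ 2 * v t) * ENNReal.ofReal √(W t) :=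
    ((hf.abs.pow_const 2).mul hv).ennreal_ofReal.mul hWmeas.sqrt.ennreal_ofReal
  have hK : ∀ t ∈ E, ∫⁻ s in Ioi t ∩ E, ENNReal.ofReal (u s) * ENNReal.ofReal √(W s)
      ≤ ENNReal.ofReal (2 * A / √(W t)) := by
    have hνtail : ∀ t ∈ E, volume.withDensity (fun s => ENNReal.ofReal (u s)) (Ioi t ∩ E) *
        ENNReal.ofReal (W t) ≤ ENNReal.ofReal A := fun t ht => by
      rw [withDensity_apply _ (measurableSet_Ioi.inter hE), ENNReal.ofReal_toReal (hWfin t ht)]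
      exact htail t ht
    intro t ht
    calc ∫⁻ s in Ioi t ∩ E, ENNReal.ofReal (u s) * ENNReal.ofReal √(W s)
        = ∫⁻ s in Ioi t ∩ E, ENNReal.ofReal √(W s)
            ∂volume.withDensity fun s => ENNReal.ofReal (u s) :=
          (setLIntegral_withDensity_eq_setLIntegral_mul _ hu.ennreal_ofReal
            hWmeas.sqrt.ennreal_ofReal (measurableSet_Ioi.inter hE)).symm
      _ ≤ _ := setLIntegral_sqrt_le_of_measure_Ioi_inter_mul_le hWmeas hA hνtail (hWpos t ht)
          (hνtail t ht)
  have hIio : ∀ s ∈ E, Iio s ∩ E = Ioo 0 s := fun s hs => Subset.antisymm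
    (fun t ht => ⟨hE0 t ht.2, ht.1⟩) (fun t ht => ⟨ht.2, hEdown s hs ht⟩)
  calc ∫⁻ s in E, ENNReal.ofReal (|∫ t in 0..s, f t| ^ 2 * u s)
      ≤ ∫⁻ s in E, 2 * (ENNReal.ofReal (u s) * ENNReal.ofReal √(W s) *
          ∫⁻ t in Iio s ∩ E, ENNReal.ofReal (|f t| ^ 2 * v t) * ENNReal.ofReal √(W t)) := by
        refine setLIntegral_mono' hE fun s hs => ?_
        rw [ENNReal.ofReal_mul (sq_nonneg _), hIio s hs]
        calc _ ≤ _ := mul_le_mul_left (ofReal_sq_intervalIntegral_le hf hv (hE0 s hs).le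
              (hv0' s hs) (hWfin s hs)) _
          _ = _ := by rw [ENNReal.ofReal_mul zero_le_two, ENNReal.ofReal_ofNat]; ring
    _ = 2 * ∫⁻ t in E, ENNReal.ofReal (|f t| ^ 2 * v t) * ENNReal.ofReal √(W t) *
          ∫⁻ s in Ioi t ∩ E, ENNReal.ofReal (u s) * ENNReal.ofReal √(W s) := by
        rw [lintegral_const_mul' _ _ ENNReal.ofNat_ne_top,
          setLIntegral_mul_setLIntegral_Iio_inter hΦ hg]
    _ ≤ 2 * ∫⁻ t in E, ENNReal.ofReal (2 * A) * ENNReal.ofReal (|f t| ^ 2 * v t) := by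
        gcongr 2 * ?_
        refine setLIntegral_mono' hE fun t ht => ?_
        calc _ ≤ ENNReal.ofReal (|f t| ^ 2 * v t) * ENNReal.ofReal √(W t) *
              ENNReal.ofReal (2 * A / √(W t)) := by gcongr; exact hK t ht
          _ = _ := by
            rw [mul_assoc, ← ENNReal.ofReal_mul (Real.sqrt_nonneg _),
              mul_div_cancel₀ _ (Real.sqrt_pos.2 (hWpos t ht)).ne', mul_comm]
    _ = ENNReal.ofReal (4 * A) * ∫⁻ s in E, ENNReal.ofReal (|f s| ^ 2 * v s) := by
        rw [lintegral_const_mul' _ _ ENNReal.ofReal_ne_top, ← mul_assoc, ← ENNReal.ofReal_ofNat 2,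
          ← ENNReal.ofReal_mul zero_le_two]
        ring_nf

theorem setLIntegral_ofReal_mul_eq_zero {α : Type*} [MeasurableSpace α] {μ : Measure α}
    {u : α → ℝ} (hu : Measurable u) {S : Set α} (hS : ∫⁻ x in S, ENNReal.ofReal (u x) ∂μ = 0)
    {φ : α → ℝ} (hφ : ∀ x, 0 ≤ φ x) : ∫⁻ x in S, ENNReal.ofReal (φ x * u x) ∂μ = 0 := by
  refine (lintegral_congr_ae ?_).trans lintegral_zero
  filter_upwards [(lintegral_eq_zero_iff hu.ennreal_ofReal).1 hS] with x hx
  simp only [Pi.zero_apply, ENNReal.ofReal_eq_zero] at hx ⊢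
  exact mul_nonpos_of_nonneg_of_nonpos (hφ x) hx

theorem lintegral_hardy_le_of_tail_bound {f u v : ℝ → ℝ} (hf : Measurable f)
    (hu : Measurable u) (hv : Measurable v) {Ω : Set ℝ} (hΩ : MeasurableSet Ω)
    (hΩ0 : ∀ s ∈ Ω, 0 < s) (hΩdown : ∀ s ∈ Ω, Ioo 0 s ⊆ Ω) (hv0 : ∀ s ∈ Ω, 0 < v s)
    {A : ℝ} (hA : 0 ≤ A)
    (htail : ∀ t ∈ Ω, (∫⁻ s in Ioi t ∩ Ω, ENNReal.ofReal (u s)) *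
      ∫⁻ r in Ioo 0 t, ENNReal.ofReal (v r)⁻¹ ≤ ENNReal.ofReal A) :
    ∫⁻ s in Ω, ENNReal.ofReal (|∫ t in 0..s, f t| ^ 2 * u s)
      ≤ ENNReal.ofReal (4 * A) * ∫⁻ s in Ω, ENNReal.ofReal (|f s| ^ 2 * v s) := by
  set W := fun t => ∫⁻ r in Ioo 0 t, ENNReal.ofReal (v r)⁻¹
  have hWmono : Monotone W := fun t t' h => lintegral_mono_set (Ioo_subset_Ioo_right h)
  have hfin : MeasurableSet {t | W t < ∞} := hWmono.measurable measurableSet_Iio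
  -- beyond the first point where `W = ∞` the tail of `u` vanishes, so `u` does not charge that part
  have hnull : ∫⁻ s in Ω \ {t | W t < ∞}, ENNReal.ofReal (u s) = 0 := by
    rw [← withDensity_apply _ (hΩ.diff hfin), ← nonpos_iff_eq_zero]
    refine measure_le_of_forall_measure_Ioi_inter_le sdiff_subset fun x hx => ?_
    rw [withDensity_apply _ (measurableSet_Ioi.inter hΩ), nonpos_iff_eq_zero]
    by_contra hne
    have hWx : W x = ∞ := not_lt_top_iff.1 hx.2
    have : _ * W x ≤ _ := htail x hx.1
    rw [hWx, ENNReal.mul_top hne, top_le_iff] at this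
    exact ENNReal.ofReal_ne_top this
  calc ∫⁻ s in Ω, ENNReal.ofReal (|∫ t in 0..s, f t| ^ 2 * u s)
      = ∫⁻ s in Ω ∩ {t | W t < ∞}, ENNReal.ofReal (|∫ t in 0..s, f t| ^ 2 * u s) := by
        rw [← lintegral_inter_add_sdiff _ _ hfin,
          setLIntegral_ofReal_mul_eq_zero hu hnull fun s => sq_nonneg _, add_zero]
    _ ≤ ENNReal.ofReal (4 * A) * ∫⁻ s in Ω ∩ {t | W t < ∞}, ENNReal.ofReal (|f s| ^ 2 * v s) := by
        refine lintegral_hardy_le_of_tail_bound_of_ne_top hf hu hv (hΩ.inter hfin)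
          (fun s hs => hΩ0 s hs.1)
          (fun s hs t ht => ⟨hΩdown s hs.1 ht, (hWmono ht.2.le).trans_lt hs.2⟩)
          (fun s hs => hv0 s hs.1) (fun s hs => hs.2.ne) hA fun t ht => ?_
        exact (mul_le_mul_left (lintegral_mono_set
          (inter_subset_inter_right _ inter_subset_left)) _).trans (htail t ht.1)
    _ ≤ ENNReal.ofReal (4 * A) * ∫⁻ s in Ω, ENNReal.ofReal (|f s| ^ 2 * v s) := by
        gcongr
        exact inter_subset_left

theorem muckenhoupt_sufficient_general (a : ℝ≥0∞) (u v : ℝ → ℝ)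
    (hu : Measurable u) (hv : Measurable v)
    (hv0 : ∀ s, 0 < s → ENNReal.ofReal s < a → 0 < v s)
    (A₁ : ℝ)
    (hA₁ : ∀ t : ℝ, 0 < t → ENNReal.ofReal t < a →
      (∫⁻ s in {s : ℝ | t < s ∧ ENNReal.ofReal s < a}, ENNReal.ofReal (u s)) *
        (∫⁻ s in Ioo (0 : ℝ) t, ENNReal.ofReal ((v s)⁻¹)) ≤ ENNReal.ofReal A₁) :
    ∀ f : ℝ → ℝ, Measurable f →
      ∫⁻ s in {s : ℝ | 0 < s ∧ ENNReal.ofReal s < a},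
          ENNReal.ofReal (|∫ t in (0 : ℝ)..s, f t| ^ 2 * u s)
        ≤ ENNReal.ofReal (4 * A₁) *
          ∫⁻ s in {s : ℝ | 0 < s ∧ ENNReal.ofReal s < a},
            ENNReal.ofReal (|f s| ^ 2 * v s) := by
  intro f hf
  -- `A₁` may be negative; only its positive part enters through `ENNReal.ofReal`
  have hA : ENNReal.ofReal (max A₁ 0) = ENNReal.ofReal A₁ := by simp
  have h4A : ENNReal.ofReal (4 * max A₁ 0) = ENNReal.ofReal (4 * A₁) := by
    rw [ENNReal.ofReal_mul zero_le_four, ENNReal.ofReal_mul zero_le_four, hA]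
  rw [← h4A]
  refine lintegral_hardy_le_of_tail_bound hf hu hv
    (measurableSet_Ioi.inter (measurableSet_lt ENNReal.measurable_ofReal measurable_const))
    (fun s hs => hs.1)
    (fun s hs t ht => ⟨ht.1, ((ENNReal.ofReal_lt_ofReal_iff hs.1).2 ht.2).trans hs.2⟩)
    (fun s hs => hv0 s hs.1 hs.2) (le_max_right _ _) fun t ht => ?_
  rw [hA]
  refine le_trans ?_ (hA₁ t ht.1 ht.2)
  gcongr
  exact fun s hs => ⟨hs.1, hs.2.2⟩

/-- Muckenhoupt sufficient condition, `p = 2`.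
Let `a ∈ (0,∞]` and `u v : ℝ → ℝ` nonnegative measurable on `(0,a)` with `v > 0` there.
If `A₁ = sup_{0<t<a} (∫_t^a u)(∫_0^t v⁻¹)` is finite (i.e. `A₁` is an upper bound),
then for every measurable `f`,
`∫₀^a (∫₀^s f)² u(s) ds ≤ 4 A₁ ∫₀^a f(s)² v(s) ds`. -/
theorem muckenhoupt_sufficient (a : ℝ≥0∞) (ha : 0 < a) (u v : ℝ → ℝ)
    (hu : Measurable u) (hv : Measurable v)
    (hu0 : ∀ s, 0 < s → ENNReal.ofReal s < a → 0 ≤ u s)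
    (hv0 : ∀ s, 0 < s → ENNReal.ofReal s < a → 0 < v s)
    (A₁ : ℝ)
    (hA₁ : ∀ t : ℝ, 0 < t → ENNReal.ofReal t < a →
      (∫⁻ s in {s : ℝ | t < s ∧ ENNReal.ofReal s < a}, ENNReal.ofReal (u s)) *
        (∫⁻ s in Ioo (0 : ℝ) t, ENNReal.ofReal ((v s)⁻¹)) ≤ ENNReal.ofReal A₁) :
    ∀ f : ℝ → ℝ, Measurable f →
      ∫⁻ s in {s : ℝ | 0 < s ∧ ENNReal.ofReal s < a},
          ENNReal.ofReal (|∫ t in (0 : ℝ)..s, f t| ^ 2 * u s)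
        ≤ ENNReal.ofReal (4 * A₁) *
          ∫⁻ s in {s : ℝ | 0 < s ∧ ENNReal.ofReal s < a},
            ENNReal.ofReal (|f s| ^ 2 * v s) :=
  muckenhoupt_sufficient_general a u v hu hv hv0 A₁ hA₁
end

section
/- Let a ∈ (0,∞], and let u, v be nonnegative measurable functions on (0,a) with v > 0. If the inequality ∫₀^a |∫₀^s f(t) dt|² u(s) ds ≤ C ∫₀^a |f(s)|² v(s) ds holds for all measurable f on (0,a), then A₁ := sup_{0<t<a} (∫_t^a u(s) ds)(∫₀^t v(s)^{-1} ds) ≤ C. -/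
/-!
Test the Hardy inequality with `f = 𝟙_(0,t) · min (1/v) n`. For `s ≥ t` the primitive
`∫₀^s f` is the constant `B = ∫₀^t min (1/v) n`, so the left side is at least
`B² ∫_t^a u`, while `f² v ≤ f` bounds the right side by `C B`. Dividing by the finite `B`
gives `(∫_t^a u) B ≤ C`, and monotone convergence as `n → ∞` removes the truncation.
-/

open MeasureTheory Set
open scoped ENNReal

lemma iSup_ofReal_min_natCast (x : ℝ) : ⨆ n : ℕ, ENNReal.ofReal (min x n) = ENNReal.ofReal x := by
  simp only [ENNReal.ofReal_min, ENNReal.ofReal_natCast, ← inf_iSup_eq, ENNReal.iSup_natCast,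
    inf_top_eq]

theorem lintegral_ofReal_eq_iSup_min_natCast {α : Type*} [MeasurableSpace α] {μ : Measure α}
    {w : α → ℝ} (hw : Measurable w) :
    ∫⁻ x, ENNReal.ofReal (w x) ∂μ = ⨆ n : ℕ, ∫⁻ x, ENNReal.ofReal (min (w x) n) ∂μ := by
  rw [← lintegral_iSup (fun n => (hw.min measurable_const).ennreal_ofReal)
    fun m n hmn x => ENNReal.ofReal_le_ofReal (min_le_min_left _ (Nat.cast_le.mpr hmn))]
  simp_rw [iSup_ofReal_min_natCast]

theorem intervalIntegral_indicator_Ioo_of_le {g : ℝ → ℝ} {t s : ℝ} (ht : 0 ≤ t) (hts : t ≤ s) :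
    ∫ x in (0 : ℝ)..s, (Ioo 0 t).indicator g x = ∫ x in Ioo 0 t, g x := by
  rw [intervalIntegral.integral_of_le (ht.trans hts), integral_indicator measurableSet_Ioo,
    Measure.restrict_restrict measurableSet_Ioo,
    inter_eq_left.mpr (Ioo_subset_Ioc_self.trans (Ioc_subset_Ioc_right hts))]

lemma sq_mul_le_self_of_le_inv {g w : ℝ} (hg : 0 ≤ g) (hw : 0 < w) (hgw : g ≤ w⁻¹) :
    g ^ 2 * w ≤ g :=
  calc g ^ 2 * w = g * (g * w) := by ring
    _ ≤ g * (w⁻¹ * w) := by gcongr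
    _ = g := by rw [inv_mul_cancel₀ hw.ne', mul_one]

theorem lintegral_sq_indicator_mul_le {α : Type*} [MeasurableSpace α] {μ : Measure α}
    {S I : Set α} {g v : α → ℝ} (hg : ∀ x ∈ I, 0 ≤ g x) (hv : ∀ x ∈ I, 0 < v x)
    (hgv : ∀ x ∈ I, g x ≤ (v x)⁻¹) :
    ∫⁻ x in S, ENNReal.ofReal (|I.indicator g x| ^ 2 * v x) ∂μ ≤
      ∫⁻ x in I, ENNReal.ofReal (g x) ∂μ :=
  calc ∫⁻ x in S, ENNReal.ofReal (|I.indicator g x| ^ 2 * v x) ∂μ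
      ≤ ∫⁻ x, ENNReal.ofReal (|I.indicator g x| ^ 2 * v x) ∂μ := setLIntegral_le_lintegral _ _
    _ ≤ ∫⁻ x, I.indicator (fun x => ENNReal.ofReal (g x)) x ∂μ := by
        refine lintegral_mono fun x => ?_
        by_cases hx : x ∈ I
        · simp only [indicator_of_mem hx, abs_of_nonneg (hg x hx)]
          exact ENNReal.ofReal_le_ofReal (sq_mul_le_self_of_le_inv (hg x hx) (hv x hx) (hgv x hx))
        · simp [indicator_of_notMem hx]
    _ ≤ ∫⁻ x in I, ENNReal.ofReal (g x) ∂μ := lintegral_indicator_le _ _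

theorem sq_mul_setLIntegral_le_hardy_indicator_Ioo {S T : Set ℝ} {t : ℝ} {g u : ℝ → ℝ}
    (ht : 0 ≤ t) (hT : MeasurableSet T) (hTS : T ⊆ S) (htT : ∀ s ∈ T, t ≤ s)
    (hg : ∀ x ∈ Ioo 0 t, 0 ≤ g x) :
    ENNReal.ofReal (∫ x in Ioo 0 t, g x) ^ 2 * ∫⁻ s in T, ENNReal.ofReal (u s) ≤
      ∫⁻ s in S, ENNReal.ofReal (|∫ x in (0 : ℝ)..s, (Ioo 0 t).indicator g x| ^ 2 * u s) := by
  have hb : 0 ≤ ∫ x in Ioo 0 t, g x := setIntegral_nonneg measurableSet_Ioo hg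
  calc ENNReal.ofReal (∫ x in Ioo 0 t, g x) ^ 2 * ∫⁻ s in T, ENNReal.ofReal (u s)
      ≤ ∫⁻ s in T, ENNReal.ofReal (∫ x in Ioo 0 t, g x) ^ 2 * ENNReal.ofReal (u s) :=
        lintegral_const_mul_le _ _
    _ = ∫⁻ s in T, ENNReal.ofReal (|∫ x in (0 : ℝ)..s, (Ioo 0 t).indicator g x| ^ 2 * u s) := by
        refine setLIntegral_congr_fun hT fun s hs => ?_
        rw [intervalIntegral_indicator_Ioo_of_le ht (htT s hs), abs_of_nonneg hb,
          ENNReal.ofReal_mul (sq_nonneg _), ENNReal.ofReal_pow hb]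
    _ ≤ _ := lintegral_mono' (Measure.restrict_mono hTS le_rfl) le_rfl

theorem setLIntegral_mul_lintegral_le_of_hardy {S T : Set ℝ} {t C : ℝ} {g u v : ℝ → ℝ}
    (ht : 0 ≤ t) (hT : MeasurableSet T) (hTS : T ⊆ S) (htT : ∀ s ∈ T, t ≤ s)
    (hv : ∀ x ∈ Ioo 0 t, 0 < v x) (hg : ∀ x ∈ Ioo 0 t, 0 ≤ g x)
    (hgv : ∀ x ∈ Ioo 0 t, g x ≤ (v x)⁻¹) (hgi : IntegrableOn g (Ioo 0 t))
    (hC : ∫⁻ s in S, ENNReal.ofReal (|∫ x in (0 : ℝ)..s, (Ioo 0 t).indicator g x| ^ 2 * u s)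
      ≤ ENNReal.ofReal C * ∫⁻ s in S, ENNReal.ofReal (|(Ioo 0 t).indicator g s| ^ 2 * v s)) :
    (∫⁻ s in T, ENNReal.ofReal (u s)) * ∫⁻ x in Ioo 0 t, ENNReal.ofReal (g x) ≤
      ENNReal.ofReal C := by
  have hB : ENNReal.ofReal (∫ x in Ioo 0 t, g x) = ∫⁻ x in Ioo 0 t, ENNReal.ofReal (g x) :=
    ofReal_integral_eq_lintegral_ofReal hgi (ae_restrict_of_forall_mem measurableSet_Ioo hg)
  set B := ∫⁻ x in Ioo 0 t, ENNReal.ofReal (g x)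
  have hlow := sq_mul_setLIntegral_le_hardy_indicator_Ioo (u := u) ht hT hTS htT hg
  rw [hB] at hlow
  have hsq : B ^ 2 * ∫⁻ s in T, ENNReal.ofReal (u s) ≤ ENNReal.ofReal C * B :=
    hlow.trans (hC.trans (mul_le_mul_right (lintegral_sq_indicator_mul_le hg hv hgv) _))
  rcases eq_or_ne B 0 with hB0 | hB0
  · simp [hB0]
  · rw [← ENNReal.mul_le_mul_iff_left hB0 (hB ▸ ENNReal.ofReal_ne_top)]
    calc _ = B ^ 2 * ∫⁻ s in T, ENNReal.ofReal (u s) := by ring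
      _ ≤ _ := hsq

theorem muckenhoupt_necessary_general (a : ℝ≥0∞) (u v : ℝ → ℝ)
    (hv : Measurable v)
    (hv0 : ∀ s, 0 < s → ENNReal.ofReal s < a → 0 < v s)
    (C : ℝ)
    (hC : ∀ f : ℝ → ℝ, Measurable f →
      ∫⁻ s in {s : ℝ | 0 < s ∧ ENNReal.ofReal s < a},
          ENNReal.ofReal (|∫ t in (0 : ℝ)..s, f t| ^ 2 * u s)
        ≤ ENNReal.ofReal C *
          ∫⁻ s in {s : ℝ | 0 < s ∧ ENNReal.ofReal s < a},
            ENNReal.ofReal (|f s| ^ 2 * v s)) :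
    ∀ t : ℝ, 0 < t → ENNReal.ofReal t < a →
      (∫⁻ s in {s : ℝ | t < s ∧ ENNReal.ofReal s < a}, ENNReal.ofReal (u s)) *
        (∫⁻ s in Ioo (0 : ℝ) t, ENNReal.ofReal ((v s)⁻¹)) ≤ ENNReal.ofReal C := by
  intro t ht hta
  have hvt : ∀ s ∈ Ioo 0 t, 0 < v s := fun s hs =>
    hv0 s hs.1 (((ENNReal.ofReal_lt_ofReal_iff ht).mpr hs.2).trans hta)
  have hT : MeasurableSet {s : ℝ | t < s ∧ ENNReal.ofReal s < a} :=
    measurableSet_Ioi.inter (measurableSet_lt ENNReal.measurable_ofReal measurable_const)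
  rw [lintegral_ofReal_eq_iSup_min_natCast (w := fun s => (v s)⁻¹) hv.inv, ENNReal.mul_iSup]
  refine iSup_le fun n => ?_
  have hgn : ∀ s ∈ Ioo 0 t, 0 ≤ min (v s)⁻¹ n := fun s hs =>
    le_min (inv_pos.mpr (hvt s hs)).le n.cast_nonneg
  have hgi : IntegrableOn (fun s => min (v s)⁻¹ n) (Ioo 0 t) :=
    .of_bound measure_Ioo_lt_top (hv.inv.min measurable_const).aestronglyMeasurable n <|
      ae_restrict_of_forall_mem measurableSet_Ioo fun s hs => by
        rw [Real.norm_of_nonneg (hgn s hs)]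
        exact min_le_right _ _
  exact setLIntegral_mul_lintegral_le_of_hardy ht.le hT (fun s hs => And.intro (ht.trans hs.1) hs.2)
    (fun s hs => hs.1.le) hvt hgn (fun s _ => min_le_left _ _) hgi
    (hC _ ((hv.inv.min measurable_const).indicator measurableSet_Ioo))

/-- Muckenhoupt necessary condition, `p = q = 2`.
If the one-dimensional weighted Hardy inequality with constant `C` holds for all
measurable `f`, then `A₁ := sup_{0<t<a} (∫_t^a u)(∫₀^t v⁻¹) ≤ C`. -/
theorem muckenhoupt_necessary (a : ℝ≥0∞) (ha : 0 < a) (u v : ℝ → ℝ)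
    (hu : Measurable u) (hv : Measurable v)
    (hu0 : ∀ s, 0 < s → ENNReal.ofReal s < a → 0 ≤ u s)
    (hv0 : ∀ s, 0 < s → ENNReal.ofReal s < a → 0 < v s)
    (C : ℝ)
    (hC : ∀ f : ℝ → ℝ, Measurable f →
      ∫⁻ s in {s : ℝ | 0 < s ∧ ENNReal.ofReal s < a},
          ENNReal.ofReal (|∫ t in (0 : ℝ)..s, f t| ^ 2 * u s)
        ≤ ENNReal.ofReal C *
          ∫⁻ s in {s : ℝ | 0 < s ∧ ENNReal.ofReal s < a},
            ENNReal.ofReal (|f s| ^ 2 * v s)) :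
    ∀ t : ℝ, 0 < t → ENNReal.ofReal t < a →
      (∫⁻ s in {s : ℝ | t < s ∧ ENNReal.ofReal s < a}, ENNReal.ofReal (u s)) *
        (∫⁻ s in Ioo (0 : ℝ) t, ENNReal.ofReal ((v s)⁻¹)) ≤ ENNReal.ofReal C :=
  muckenhoupt_necessary_general a u v hv hv0 C hC
end

section
/- Let a ∈ (0,∞], and let u, v be nonnegative measurable functions on (0,a) with v > 0. If A₂ := sup_{0<t<a} (∫₀^t u(s) ds)(∫_t^a v(s)^{-1} ds) < ∞, then for every measurable f on (0,a): ∫₀^a |∫_s^a f(t) dt|² u(s) ds ≤ 4 A₂ ∫₀^a |f(s)|² v(s) ds. -/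
/-!
Put `μ = u ds` on `(0, ∞)` and `ν = v⁻¹ dt` on `(0, a)`, and write `U s = μ (-∞, s)`,
`W t = ν (t, ∞)`, so that `U W ≤ A₂`. Since these measures have no atoms, the sublevel sets of
`U` are intervals and `μ {U < x} ≤ x`; a layer-cake computation then gives
`∫_{s < t} U^{-1/2} dμ ≤ 2 U(t)^{1/2}`, and symmetrically for `W`.
Cauchy–Schwarz with the weight `W^{1/4}` gives `(∫_s^a |f|)² ≤ 2 W(s)^{1/2} ∫_s^a f² v W^{1/2}`.
Integrating in `μ` and exchanging the integrals leaves `∫_{s < t} W^{1/2} dμ`, which is at most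
`A₂^{1/2} ∫_{s < t} U^{-1/2} dμ ≤ 2 A₂^{1/2} U(t)^{1/2} ≤ 2 A₂ W(t)^{-1/2}`,
whence the constant `4 A₂`.
-/

open MeasureTheory Set
open scoped ENNReal

theorem measure_le_of_forall_measure_Ioo_le {μ : Measure ℝ} [NullSingletonClass μ] {S : Set ℝ}
    {x : ℝ≥0∞} (h : ∀ a ∈ S, ∀ b ∈ S, μ (Ioo a b) ≤ x) : μ S ≤ x := by
  obtain ⟨D, hDS, hDc, hSD⟩ :=
    (TopologicalSpace.IsSeparable.of_separableSpace S).exists_countable_dense_subset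
  have := hDc.to_subtype
  set I := ⋃ d : D × D, Ioo (d.1 : ℝ) d.2
  have hI : μ I ≤ x := by
    have hdir : Directed (· ⊆ ·) fun d : D × D => Ioo (d.1 : ℝ) d.2 := fun d e =>
      ⟨(min d.1 e.1, max d.2 e.2),
        Ioo_subset_Ioo (min_le_left _ _) (le_max_left _ _),
        Ioo_subset_Ioo (min_le_right _ _) (le_max_right _ _)⟩
    rw [hdir.measure_iUnion]
    exact iSup_le fun d => h _ (hDS d.1.2) _ (hDS d.2.2)
  have hrest : S \ I ⊆ {s ∈ S | ∀ d ∈ D, s ≤ d} ∪ {s ∈ S | ∀ d ∈ D, d ≤ s} := by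
    rintro s ⟨hs, hsI⟩
    by_contra hne
    simp only [mem_union, mem_ofPred_eq, hs, true_and, not_or, not_forall, not_le] at hne
    obtain ⟨⟨d₁, hd₁, hd₁s⟩, ⟨d₂, hd₂, hsd₂⟩⟩ := hne
    exact hsI (mem_iUnion.2 ⟨(⟨d₁, hd₁⟩, ⟨d₂, hd₂⟩), hd₁s, hsd₂⟩)
  -- `S ⊆ closure D`, so a lower (upper) bound of `D` in `S` is the least (greatest) point of `S`
  have hmin : {s ∈ S | ∀ d ∈ D, s ≤ d}.Subsingleton := fun s hs s' hs' =>
    le_antisymm (closure_minimal hs.2 isClosed_Ici (hSD hs'.1))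
      (closure_minimal hs'.2 isClosed_Ici (hSD hs.1))
  have hmax : {s ∈ S | ∀ d ∈ D, d ≤ s}.Subsingleton := fun s hs s' hs' =>
    le_antisymm (closure_minimal hs'.2 isClosed_Iic (hSD hs.1))
      (closure_minimal hs.2 isClosed_Iic (hSD hs'.1))
  have hnull : μ (S \ I) = 0 :=
    measure_mono_null hrest (measure_union_null (hmin.measure_zero μ) (hmax.measure_zero μ))
  calc μ S ≤ μ (S ∩ I) + μ (S \ I) := measure_le_inter_add_sdiff μ S I
    _ ≤ x := by rw [hnull, add_zero]; exact (measure_mono inter_subset_right).trans hI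

section PowerKernel

variable {p : ℝ}

theorem lintegral_Ioi_ofReal_mul_rpow (hp : 0 < p) {c : ℝ} (hc : 0 < c) :
    ∫⁻ x in Ioi c, ENNReal.ofReal (p * x ^ (-p - 1)) = ENNReal.ofReal (c ^ (-p)) := by
  have hint : IntegrableOn (fun x : ℝ => p * x ^ (-p - 1)) (Ioi c) :=
    (integrableOn_Ioi_rpow_of_lt (by linarith) hc).const_mul p
  have hnn : 0 ≤ᵐ[volume.restrict (Ioi c)] fun x : ℝ => p * x ^ (-p - 1) := by
    filter_upwards [ae_restrict_mem measurableSet_Ioi] with x hx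
    have : 0 < x := hc.trans hx
    positivity
  rw [← ofReal_integral_eq_lintegral_ofReal hint hnn, integral_const_mul,
    integral_Ioi_rpow_of_lt (by linarith) hc, show -p - 1 + 1 = -p by ring]
  field_simp

theorem lintegral_Ioc_ofReal_mul_rpow (hp0 : 0 < p) (hp1 : p < 1) {m : ℝ} (hm : 0 ≤ m) :
    ∫⁻ x in Ioc 0 m, ENNReal.ofReal (p * x ^ (-p))
      = ENNReal.ofReal (p / (1 - p) * m ^ (1 - p)) := by
  have hint : IntegrableOn (fun x : ℝ => p * x ^ (-p)) (Ioc 0 m) := by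
    have := intervalIntegral.intervalIntegrable_rpow' (a := 0) (b := m) (r := -p) (by linarith)
    exact ((intervalIntegrable_iff_integrableOn_Ioc_of_le hm).1 this).const_mul p
  have hnn : 0 ≤ᵐ[volume.restrict (Ioc 0 m)] fun x : ℝ => p * x ^ (-p) := by
    filter_upwards [ae_restrict_mem measurableSet_Ioc] with x hx
    have : 0 < x := hx.1
    positivity
  rw [← ofReal_integral_eq_lintegral_ofReal hint hnn, integral_const_mul,
    ← intervalIntegral.integral_of_le hm, integral_rpow (Or.inl (by linarith)),
    Real.zero_rpow (by linarith)]
  congr 1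
  rw [show -p + 1 = 1 - p by ring]
  field_simp
  ring

theorem ENNReal.rpow_neg_eq_lintegral_indicator (hp : 0 < p) {y : ℝ≥0∞} (hy : y ≠ 0) :
    y ^ (-p) = ∫⁻ x in Ioi 0,
      {x : ℝ | y < ENNReal.ofReal x}.indicator (fun x => ENNReal.ofReal (p * x ^ (-p - 1))) x := by
  rcases eq_or_ne y ∞ with rfl | hy'
  · simp [ENNReal.top_rpow_of_neg (neg_neg_of_pos hp)]
  have hc : 0 < y.toReal := ENNReal.toReal_pos hy hy'
  have hset : {x : ℝ | y < ENNReal.ofReal x} = Ioi y.toReal := by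
    ext x
    exact ENNReal.lt_ofReal_iff_toReal_lt hy'
  rw [hset, lintegral_indicator measurableSet_Ioi, Measure.restrict_restrict measurableSet_Ioi,
    inter_eq_self_of_subset_left (Ioi_subset_Ioi hc.le), lintegral_Ioi_ofReal_mul_rpow hp hc,
    ← ENNReal.ofReal_rpow_of_pos hc, ENNReal.ofReal_toReal hy']

theorem lintegral_Ioi_ofReal_mul_rpow_mul_min_le (hp0 : 0 < p) (hp1 : p < 1) (M : ℝ≥0∞) :
    ∫⁻ x in Ioi 0, ENNReal.ofReal (p * x ^ (-p - 1)) * min (ENNReal.ofReal x) M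
      ≤ ENNReal.ofReal (1 - p)⁻¹ * M ^ (1 - p) := by
  rcases eq_or_ne M ∞ with rfl | hM
  · rw [ENNReal.top_rpow_of_pos (by linarith), ENNReal.mul_top (by simp [hp1])]
    exact le_top
  rcases eq_or_ne M 0 with rfl | hM0
  · simp
  set m := M.toReal
  have hm0 : 0 < m := ENNReal.toReal_pos hM0 hM
  have hm := hm0.le
  rw [← Ioc_union_Ioi_eq_Ioi hm, lintegral_union measurableSet_Ioi Ioc_disjoint_Ioi_same]
  have hlow : ∫⁻ x in Ioc 0 m, ENNReal.ofReal (p * x ^ (-p - 1)) * min (ENNReal.ofReal x) M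
      ≤ ENNReal.ofReal (p / (1 - p) * m ^ (1 - p)) := by
    rw [← lintegral_Ioc_ofReal_mul_rpow hp0 hp1 hm]
    refine setLIntegral_mono' measurableSet_Ioc fun x hx => ?_
    calc ENNReal.ofReal (p * x ^ (-p - 1)) * min (ENNReal.ofReal x) M
        ≤ ENNReal.ofReal (p * x ^ (-p - 1)) * ENNReal.ofReal x := by gcongr; exact min_le_left _ _
      _ = ENNReal.ofReal (p * x ^ (-p)) := by
        rw [← ENNReal.ofReal_mul (by have := hx.1; positivity), mul_assoc,
          ← Real.rpow_add_one hx.1.ne', sub_add_cancel]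
  have hhigh : ∫⁻ x in Ioi m, ENNReal.ofReal (p * x ^ (-p - 1)) * min (ENNReal.ofReal x) M
      ≤ ENNReal.ofReal (m ^ (-p) * m) := by
    calc _ ≤ ∫⁻ x in Ioi m, ENNReal.ofReal (p * x ^ (-p - 1)) * M := by
          gcongr; exact min_le_right _ _
      _ = ENNReal.ofReal (m ^ (-p) * m) := by
        rw [lintegral_mul_const' _ _ hM, lintegral_Ioi_ofReal_mul_rpow hp0 hm0,
          ENNReal.ofReal_mul (by positivity), ENNReal.ofReal_toReal hM]
  calc _ ≤ ENNReal.ofReal (p / (1 - p) * m ^ (1 - p)) + ENNReal.ofReal (m ^ (-p) * m) :=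
        add_le_add hlow hhigh
    _ = ENNReal.ofReal (1 - p)⁻¹ * M ^ (1 - p) := by
      have h1p : 0 < 1 - p := by linarith
      rw [← ENNReal.ofReal_add (by positivity) (by positivity), ← ENNReal.ofReal_toReal hM,
        ENNReal.ofReal_rpow_of_pos hm0, ← ENNReal.ofReal_mul (by positivity)]
      congr 1
      rw [← Real.rpow_add_one hm0.ne', show -p + 1 = 1 - p by ring]
      field_simp
      ring

end PowerKernel

section SubUniform

variable {α : Type*} [MeasurableSpace α] {ν : Measure α} {h : α → ℝ≥0∞}

theorem ae_ne_zero_of_forall_measure_lt_le (hν : ∀ x, ν {s | h s < x} ≤ x) :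
    ∀ᵐ s ∂ν, h s ≠ 0 := by
  rw [ae_iff]
  refine nonpos_iff_eq_zero.1 (le_of_forall_gt_imp_ge_of_dense fun x hx => ?_)
  refine (measure_mono fun s hs => ?_).trans (hν x)
  show h s < x
  rwa [not_not.1 hs]

theorem lintegral_rpow_neg_le_of_forall_measure_lt_le [SFinite ν] (hh : Measurable h)
    (hν : ∀ x, ν {s | h s < x} ≤ x) {p : ℝ} (hp0 : 0 < p) (hp1 : p < 1) :
    ∫⁻ s, h s ^ (-p) ∂ν ≤ ENNReal.ofReal (1 - p)⁻¹ * ν univ ^ (1 - p) := by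
  set k : ℝ → ℝ≥0∞ := fun x => ENNReal.ofReal (p * x ^ (-p - 1))
  have hk : Measurable k := by fun_prop
  have hlevel : ∀ x : ℝ, MeasurableSet {s | h s < ENNReal.ofReal x} := fun x =>
    hh measurableSet_Iio
  calc ∫⁻ s, h s ^ (-p) ∂ν
      = ∫⁻ s, (∫⁻ x in Ioi (0 : ℝ), {x : ℝ | h s < ENNReal.ofReal x}.indicator k x) ∂ν := by
        refine lintegral_congr_ae ?_
        filter_upwards [ae_ne_zero_of_forall_measure_lt_le hν] with s hs
        exact ENNReal.rpow_neg_eq_lintegral_indicator hp0 hs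
    _ = ∫⁻ x in Ioi 0, k x * ν {s | h s < ENNReal.ofReal x} := by
        rw [lintegral_lintegral_swap]
        · refine lintegral_congr fun x => ?_
          rw [← lintegral_indicator_const (hlevel x)]
          exact lintegral_congr fun s => by simp only [indicator_apply, mem_ofPred_eq]
        · exact (Measurable.ite (measurableSet_lt (hh.comp measurable_fst)
            (ENNReal.measurable_ofReal.comp measurable_snd)) (hk.comp measurable_snd)
            measurable_const).aemeasurable
    _ ≤ ∫⁻ x in Ioi 0, k x * min (ENNReal.ofReal x) (ν univ) := by
        gcongr with x
        exact le_min (hν _) (measure_mono (subset_univ _))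
    _ ≤ ENNReal.ofReal (1 - p)⁻¹ * ν univ ^ (1 - p) :=
        lintegral_Ioi_ofReal_mul_rpow_mul_min_le hp0 hp1 _

end SubUniform

theorem ENNReal.lintegral_mul_sq_le {α : Type*} [MeasurableSpace α] (μ : Measure α)
    {f g : α → ℝ≥0∞} (hf : AEMeasurable f μ) (hg : AEMeasurable g μ) :
    (∫⁻ a, f a * g a ∂μ) ^ 2 ≤ (∫⁻ a, f a ^ 2 ∂μ) * ∫⁻ a, g a ^ 2 ∂μ := by
  have h := ENNReal.lintegral_mul_le_Lp_mul_Lq μ Real.HolderConjugate.two_two hf hg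
  simp only [Pi.mul_apply, ENNReal.rpow_two] at h
  calc _ ≤ ((∫⁻ a, f a ^ 2 ∂μ) ^ (1 / 2 : ℝ) * (∫⁻ a, g a ^ 2 ∂μ) ^ (1 / 2 : ℝ)) ^ 2 := by
        gcongr
    _ = _ := by
      rw [mul_pow, ← ENNReal.rpow_mul_natCast, ← ENNReal.rpow_mul_natCast]
      norm_num

theorem ENNReal.rpow_le_rpow_mul_rpow_neg_of_mul_le {u w A : ℝ≥0∞} (h : u * w ≤ A) (hu : u ≠ 0)
    (hA : A ≠ ∞) {q : ℝ} (hq : 0 ≤ q) : w ^ q ≤ A ^ q * u ^ (-q) := by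
  have hw : w ≤ A / u := (ENNReal.le_div_iff_mul_le (Or.inl hu) (Or.inr hA)).2 (by rwa [mul_comm])
  calc w ^ q ≤ (A / u) ^ q := ENNReal.rpow_le_rpow hw hq
    _ = A ^ q * u ^ (-q) := by
      rw [div_eq_mul_inv, ENNReal.mul_rpow_of_nonneg _ _ hq, ENNReal.inv_rpow, ENNReal.rpow_neg]

theorem lintegral_setLIntegral_Ioi_swap {μ ν : Measure ℝ} [SFinite μ] [SFinite ν]
    {f : ℝ → ℝ → ℝ≥0∞} (hf : Measurable (Function.uncurry f)) :
    ∫⁻ s, ∫⁻ t in Ioi s, f s t ∂ν ∂μ = ∫⁻ t, ∫⁻ s in Iio t, f s t ∂μ ∂ν := by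
  have hD : MeasurableSet {q : ℝ × ℝ | q.1 < q.2} := measurableSet_lt measurable_fst measurable_snd
  have key := lintegral_lintegral_swap (μ := μ) (ν := ν)
    (f := fun s t => {q : ℝ × ℝ | q.1 < q.2}.indicator (Function.uncurry f) (s, t))
    ((hf.indicator hD).aemeasurable)
  convert key using 3 with s t
  · rw [← lintegral_indicator measurableSet_Ioi]
    rfl
  · rw [← lintegral_indicator measurableSet_Iio]
    rfl

section CumulativeMeasure

variable (μ : Measure ℝ)

theorem measurable_measure_Iio : Measurable fun s => μ (Iio s) :=
  Monotone.measurable fun _ _ h => measure_mono (Iio_subset_Iio h)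

theorem measurable_measure_Ioi : Measurable fun s => μ (Ioi s) :=
  Antitone.measurable fun _ _ h => measure_mono (Ioi_subset_Ioi h)

variable [NullSingletonClass μ]

theorem measure_setOf_measure_Iio_lt_le (x : ℝ≥0∞) :
    μ {s | μ (Iio s) < x} ≤ x :=
  measure_le_of_forall_measure_Ioo_le fun _ _ _ hb => (measure_mono Ioo_subset_Iio_self).trans hb.le

theorem measure_setOf_measure_Ioi_lt_le (x : ℝ≥0∞) :
    μ {s | μ (Ioi s) < x} ≤ x :=
  measure_le_of_forall_measure_Ioo_le fun _ ha _ _ => (measure_mono Ioo_subset_Ioi_self).trans ha.le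

variable [SFinite μ] {p : ℝ}

theorem setLIntegral_Iio_measure_Iio_rpow_neg_le (t : ℝ) (hp0 : 0 < p) (hp1 : p < 1) :
    ∫⁻ s in Iio t, μ (Iio s) ^ (-p) ∂μ ≤ ENNReal.ofReal (1 - p)⁻¹ * μ (Iio t) ^ (1 - p) := by
  have h := lintegral_rpow_neg_le_of_forall_measure_lt_le (ν := μ.restrict (Iio t))
    (measurable_measure_Iio μ)
    (fun x => (Measure.restrict_apply_le _ _).trans (measure_setOf_measure_Iio_lt_le μ x)) hp0 hp1
  rwa [Measure.restrict_apply_univ] at h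

theorem setLIntegral_Ioi_measure_Ioi_rpow_neg_le (s : ℝ) (hp0 : 0 < p) (hp1 : p < 1) :
    ∫⁻ t in Ioi s, μ (Ioi t) ^ (-p) ∂μ ≤ ENNReal.ofReal (1 - p)⁻¹ * μ (Ioi s) ^ (1 - p) := by
  have h := lintegral_rpow_neg_le_of_forall_measure_lt_le (ν := μ.restrict (Ioi s))
    (measurable_measure_Ioi μ)
    (fun x => (Measure.restrict_apply_le _ _).trans (measure_setOf_measure_Ioi_lt_le μ x)) hp0 hp1
  rwa [Measure.restrict_apply_univ] at h

end CumulativeMeasure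

section Hardy

variable {μ ν : Measure ℝ}

theorem sq_setLIntegral_Ioi_le [NullSingletonClass ν] [SFinite ν] {φ : ℝ → ℝ≥0∞}
    (hφ : Measurable φ) {s : ℝ} (hs : ν (Ioi s) ≠ ∞) :
    (∫⁻ t in Ioi s, φ t ∂ν) ^ 2
      ≤ 2 * ν (Ioi s) ^ (1 / 2 : ℝ) * ∫⁻ t in Ioi s, φ t ^ 2 * ν (Ioi t) ^ (1 / 2 : ℝ) ∂ν := by
  set W := fun t => ν (Ioi t)
  have hW : Measurable W := measurable_measure_Ioi ν
  -- Cauchy–Schwarz after splitting `φ = (φ W^{1/4}) W^{-1/4}`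
  have hsplit : ∀ᵐ t ∂ν.restrict (Ioi s), φ t = φ t * W t ^ (1 / 4 : ℝ) * W t ^ (-(1 / 4) : ℝ) := by
    filter_upwards [ae_restrict_of_ae (ae_ne_zero_of_forall_measure_lt_le
      (measure_setOf_measure_Ioi_lt_le ν)), ae_restrict_mem measurableSet_Ioi] with t h0 ht
    have htop : W t ≠ ∞ := ne_top_of_le_ne_top hs (measure_mono (Ioi_subset_Ioi ht.le))
    rw [mul_assoc, ← ENNReal.rpow_add _ _ h0 htop]
    norm_num
  calc (∫⁻ t in Ioi s, φ t ∂ν) ^ 2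
      = (∫⁻ t in Ioi s, φ t * W t ^ (1 / 4 : ℝ) * W t ^ (-(1 / 4) : ℝ) ∂ν) ^ 2 := by
        rw [lintegral_congr_ae hsplit]
    _ ≤ (∫⁻ t in Ioi s, (φ t * W t ^ (1 / 4 : ℝ)) ^ 2 ∂ν) *
          ∫⁻ t in Ioi s, (W t ^ (-(1 / 4) : ℝ)) ^ 2 ∂ν :=
        ENNReal.lintegral_mul_sq_le _ (by fun_prop) (by fun_prop)
    _ = (∫⁻ t in Ioi s, φ t ^ 2 * W t ^ (1 / 2 : ℝ) ∂ν) *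
          ∫⁻ t in Ioi s, W t ^ (-(1 / 2) : ℝ) ∂ν := by
        congr 1 <;> refine lintegral_congr fun t => ?_
        · rw [mul_pow, ← ENNReal.rpow_mul_natCast]
          norm_num
        · rw [← ENNReal.rpow_mul_natCast]
          norm_num
    _ ≤ (∫⁻ t in Ioi s, φ t ^ 2 * W t ^ (1 / 2 : ℝ) ∂ν) * (2 * W s ^ (1 / 2 : ℝ)) := by
        gcongr
        have h := setLIntegral_Ioi_measure_Ioi_rpow_neg_le ν s (p := 1 / 2) (by norm_num)
          (by norm_num)
        norm_num at h
        exact h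
    _ = _ := mul_comm _ _

theorem lintegral_sq_setLIntegral_Ioi_le [NullSingletonClass μ] [SFinite μ] [NullSingletonClass ν]
    [SFinite ν] {A : ℝ≥0∞} (hA : A ≠ ∞) (hμν : ∀ t, μ (Iio t) * ν (Ioi t) ≤ A)
    {φ : ℝ → ℝ≥0∞} (hφ : Measurable φ) :
    ∫⁻ s, (∫⁻ t in Ioi s, φ t ∂ν) ^ 2 ∂μ ≤ 4 * A * ∫⁻ t, φ t ^ 2 ∂ν := by
  set U := fun s => μ (Iio s)
  set W := fun t => ν (Ioi t)
  have hW : Measurable W := measurable_measure_Ioi ν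
  have hU0 : ∀ᵐ s ∂μ, U s ≠ 0 :=
    ae_ne_zero_of_forall_measure_lt_le (measure_setOf_measure_Iio_lt_le μ)
  have hinner : ∀ t,
      ∫⁻ s in Iio t, W s ^ (1 / 2 : ℝ) ∂μ ≤ 2 * A ^ (1 / 2 : ℝ) * U t ^ (1 / 2 : ℝ) := by
    intro t
    have hU := setLIntegral_Iio_measure_Iio_rpow_neg_le μ t (p := 1 / 2) (by norm_num) (by norm_num)
    norm_num at hU
    calc ∫⁻ s in Iio t, W s ^ (1 / 2 : ℝ) ∂μ
        ≤ ∫⁻ s in Iio t, A ^ (1 / 2 : ℝ) * U s ^ (-(1 / 2) : ℝ) ∂μ := by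
          refine lintegral_mono_ae (ae_restrict_of_ae ?_)
          filter_upwards [hU0] with s hs
          exact ENNReal.rpow_le_rpow_mul_rpow_neg_of_mul_le (hμν s) hs hA (by norm_num)
      _ = A ^ (1 / 2 : ℝ) * ∫⁻ s in Iio t, U s ^ (-(1 / 2) : ℝ) ∂μ :=
          lintegral_const_mul' _ _ (ENNReal.rpow_ne_top_of_nonneg (by norm_num) hA)
      _ ≤ A ^ (1 / 2 : ℝ) * (2 * U t ^ (1 / 2 : ℝ)) := by gcongr
      _ = 2 * A ^ (1 / 2 : ℝ) * U t ^ (1 / 2 : ℝ) := by ring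
  have hpoint : ∀ t, 2 * A ^ (1 / 2 : ℝ) * U t ^ (1 / 2 : ℝ) * (2 * (φ t ^ 2 * W t ^ (1 / 2 : ℝ)))
      ≤ 4 * A * φ t ^ 2 := by
    intro t
    have hUW : U t ^ (1 / 2 : ℝ) * W t ^ (1 / 2 : ℝ) ≤ A ^ (1 / 2 : ℝ) := by
      rw [← ENNReal.mul_rpow_of_nonneg _ _ (by norm_num)]
      exact ENNReal.rpow_le_rpow (hμν t) (by norm_num)
    have hAA : A ^ (1 / 2 : ℝ) * A ^ (1 / 2 : ℝ) = A := by
      rw [← ENNReal.rpow_add_of_nonneg _ _ (by norm_num) (by norm_num)]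
      norm_num
    calc _ = 4 * φ t ^ 2 * A ^ (1 / 2 : ℝ) * (U t ^ (1 / 2 : ℝ) * W t ^ (1 / 2 : ℝ)) := by ring
      _ ≤ 4 * φ t ^ 2 * A ^ (1 / 2 : ℝ) * A ^ (1 / 2 : ℝ) := by gcongr
      _ = 4 * A * φ t ^ 2 := by rw [mul_assoc _ (A ^ _), hAA]; ring
  calc ∫⁻ s, (∫⁻ t in Ioi s, φ t ∂ν) ^ 2 ∂μ
      ≤ ∫⁻ s, ∫⁻ t in Ioi s, W s ^ (1 / 2 : ℝ) * (2 * (φ t ^ 2 * W t ^ (1 / 2 : ℝ))) ∂ν ∂μ := by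
        refine lintegral_mono_ae ?_
        filter_upwards [hU0] with s hs
        have hWs : W s ≠ ∞ := by
          intro h
          have h' := hμν s
          rw [show ν (Ioi s) = ∞ from h, ENNReal.mul_top hs] at h'
          exact hA (top_le_iff.1 h')
        rw [lintegral_const_mul _ (by fun_prop), lintegral_const_mul _ (by fun_prop)]
        exact (sq_setLIntegral_Ioi_le hφ hWs).trans_eq (by ring)
    _ = ∫⁻ t, ∫⁻ s in Iio t, W s ^ (1 / 2 : ℝ) * (2 * (φ t ^ 2 * W t ^ (1 / 2 : ℝ))) ∂μ ∂ν :=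
        lintegral_setLIntegral_Ioi_swap (by fun_prop)
    _ ≤ ∫⁻ t, 4 * A * φ t ^ 2 ∂ν := by
        refine lintegral_mono fun t => ?_
        rw [lintegral_mul_const _ (by fun_prop)]
        exact (mul_le_mul_left (hinner t) _).trans (hpoint t)
    _ = 4 * A * ∫⁻ t, φ t ^ 2 ∂ν := lintegral_const_mul _ (by fun_prop)

end Hardy

theorem setLIntegral_withDensity_restrict {w : ℝ → ℝ} (hw : Measurable w) {S B : Set ℝ}
    (hS : MeasurableSet S) (hB : MeasurableSet B) {g : ℝ → ℝ≥0∞} (hg : Measurable g) :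
    ∫⁻ t in B, g t ∂(volume.withDensity fun t => ENNReal.ofReal (w t)).restrict S
      = ∫⁻ t in B ∩ S, ENNReal.ofReal (w t) * g t := by
  rw [Measure.restrict_restrict hB,
    setLIntegral_withDensity_eq_setLIntegral_mul _ hw.ennreal_ofReal hg (hB.inter hS)]
  rfl

theorem measurableSet_pos_ofReal_lt (a : ℝ≥0∞) :
    MeasurableSet {s : ℝ | 0 < s ∧ ENNReal.ofReal s < a} :=
  measurableSet_Ioi.inter (measurableSet_lt ENNReal.measurable_ofReal measurable_const)

section Weights

variable {a : ℝ≥0∞} {u v : ℝ → ℝ} {A₂ : ℝ}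

theorem measure_Iio_mul_measure_Ioi_le (hA₂ : ∀ t : ℝ, 0 < t → ENNReal.ofReal t < a →
      (∫⁻ s in Ioo (0 : ℝ) t, ENNReal.ofReal (u s)) *
        (∫⁻ s in {s : ℝ | t < s ∧ ENNReal.ofReal s < a}, ENNReal.ofReal ((v s)⁻¹))
        ≤ ENNReal.ofReal A₂) (t : ℝ) :
    (volume.withDensity fun s => ENNReal.ofReal (u s)).restrict (Ioi 0) (Iio t) *
      (volume.withDensity fun s => ENNReal.ofReal (v s)⁻¹).restrict
        {s | 0 < s ∧ ENNReal.ofReal s < a} (Ioi t) ≤ ENNReal.ofReal A₂ := by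
  rw [Measure.restrict_apply' measurableSet_Ioi, Iio_inter_Ioi, withDensity_apply' _ _,
    Measure.restrict_apply measurableSet_Ioi, withDensity_apply' _ _]
  rcases le_or_gt t 0 with ht0 | ht0
  · simp [Ioo_eq_empty_of_le ht0]
  rcases le_or_gt a (ENNReal.ofReal t) with hta | hta
  · have hempty : Ioi t ∩ {s : ℝ | 0 < s ∧ ENNReal.ofReal s < a} = ∅ :=
      eq_empty_of_forall_notMem fun s hs =>
        (hta.trans (ENNReal.ofReal_le_ofReal hs.1.le)).not_gt hs.2.2
    simp [hempty]
  calc _ ≤ (∫⁻ s in Ioo (0 : ℝ) t, ENNReal.ofReal (u s)) *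
        (∫⁻ s in {s : ℝ | t < s ∧ ENNReal.ofReal s < a}, ENNReal.ofReal ((v s)⁻¹)) := by
        gcongr
        exact fun s hs => ⟨hs.1, hs.2.2⟩
    _ ≤ ENNReal.ofReal A₂ := hA₂ t ht0 hta

theorem setLIntegral_ofReal_sq_integral_le (hu : Measurable u) (hv : Measurable v)
    (hv0 : ∀ s, 0 < s → ENNReal.ofReal s < a → 0 < v s) {f : ℝ → ℝ} (hf : Measurable f) :
    ∫⁻ s in {s : ℝ | 0 < s ∧ ENNReal.ofReal s < a},
        ENNReal.ofReal (|∫ t in {t : ℝ | s < t ∧ ENNReal.ofReal t < a}, f t| ^ 2 * u s)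
      ≤ ∫⁻ s, (∫⁻ t in Ioi s, ENNReal.ofReal (|f t| * v t)
          ∂(volume.withDensity fun s => ENNReal.ofReal (v s)⁻¹).restrict
            {s | 0 < s ∧ ENNReal.ofReal s < a}) ^ 2
          ∂(volume.withDensity fun s => ENNReal.ofReal (u s)).restrict (Ioi 0) := by
  set S := {s : ℝ | 0 < s ∧ ENNReal.ofReal s < a}
  set ν := (volume.withDensity fun s => ENNReal.ofReal (v s)⁻¹).restrict S
  have hS : MeasurableSet S := measurableSet_pos_ofReal_lt a
  have hinner : ∀ s, ∫⁻ t in Ioi s, ENNReal.ofReal (|f t| * v t) ∂ν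
      = ∫⁻ t in Ioi s ∩ S, ENNReal.ofReal |f t| := by
    intro s
    rw [setLIntegral_withDensity_restrict (w := fun t => (v t)⁻¹) hv.inv hS measurableSet_Ioi
      (by fun_prop)]
    refine setLIntegral_congr_fun (measurableSet_Ioi.inter hS) fun t ht => ?_
    have hvt := hv0 t ht.2.1 ht.2.2
    rw [← ENNReal.ofReal_mul (inv_nonneg.2 hvt.le)]
    congr 1
    field_simp
  have hmeas : Measurable fun s => (∫⁻ t in Ioi s, ENNReal.ofReal (|f t| * v t) ∂ν) ^ 2 :=
    (Antitone.measurable fun _ _ h => lintegral_mono_set (Ioi_subset_Ioi h)).pow_const 2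
  rw [setLIntegral_withDensity_eq_setLIntegral_mul _ hu.ennreal_ofReal hmeas measurableSet_Ioi]
  refine (setLIntegral_mono' hS fun s hs => ?_).trans (lintegral_mono_set fun s hs => hs.1)
  have habs : ENNReal.ofReal |∫ t in {t : ℝ | s < t ∧ ENNReal.ofReal t < a}, f t|
      ≤ ∫⁻ t in {t : ℝ | s < t ∧ ENNReal.ofReal t < a}, ENNReal.ofReal |f t| := by
    simpa only [Real.enorm_eq_ofReal_abs] using enorm_integral_le_lintegral_enorm f
  calc _ = ENNReal.ofReal (u s) *
        ENNReal.ofReal |∫ t in {t : ℝ | s < t ∧ ENNReal.ofReal t < a}, f t| ^ 2 := by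
        rw [ENNReal.ofReal_mul (by positivity), ENNReal.ofReal_pow (abs_nonneg _), mul_comm]
    _ ≤ ENNReal.ofReal (u s) * (∫⁻ t in Ioi s ∩ S, ENNReal.ofReal |f t|) ^ 2 := by
        gcongr
        exact habs.trans (lintegral_mono_set fun t ht => ⟨ht.1, hs.1.trans ht.1, ht.2⟩)
    _ = _ := by simp only [Pi.mul_apply, hinner]

theorem lintegral_ofReal_mul_sq_withDensity (hv : Measurable v)
    (hv0 : ∀ s, 0 < s → ENNReal.ofReal s < a → 0 < v s) {f : ℝ → ℝ} (hf : Measurable f) :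
    ∫⁻ t, ENNReal.ofReal (|f t| * v t) ^ 2
        ∂(volume.withDensity fun s => ENNReal.ofReal (v s)⁻¹).restrict
          {s | 0 < s ∧ ENNReal.ofReal s < a}
      = ∫⁻ s in {s : ℝ | 0 < s ∧ ENNReal.ofReal s < a}, ENNReal.ofReal (|f s| ^ 2 * v s) := by
  have hS := measurableSet_pos_ofReal_lt a
  rw [← setLIntegral_univ, setLIntegral_withDensity_restrict (w := fun t => (v t)⁻¹) hv.inv hS
    MeasurableSet.univ (by fun_prop), univ_inter]
  refine setLIntegral_congr_fun hS fun t ht => ?_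
  have hvt := hv0 t ht.1 ht.2
  rw [← ENNReal.ofReal_pow (by positivity), ← ENNReal.ofReal_mul (inv_nonneg.2 hvt.le)]
  congr 1
  field_simp

end Weights

theorem muckenhoupt_dual_sufficient_general (a : ℝ≥0∞) (u v : ℝ → ℝ)
    (hu : Measurable u) (hv : Measurable v)
    (hv0 : ∀ s, 0 < s → ENNReal.ofReal s < a → 0 < v s)
    (A₂ : ℝ)
    (hA₂ : ∀ t : ℝ, 0 < t → ENNReal.ofReal t < a →
      (∫⁻ s in Ioo (0 : ℝ) t, ENNReal.ofReal (u s)) *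
        (∫⁻ s in {s : ℝ | t < s ∧ ENNReal.ofReal s < a}, ENNReal.ofReal ((v s)⁻¹))
        ≤ ENNReal.ofReal A₂) :
    ∀ f : ℝ → ℝ, Measurable f →
      ∫⁻ s in {s : ℝ | 0 < s ∧ ENNReal.ofReal s < a},
          ENNReal.ofReal
            (|∫ t in {t : ℝ | s < t ∧ ENNReal.ofReal t < a}, f t| ^ 2 * u s)
        ≤ ENNReal.ofReal (4 * A₂) *
          ∫⁻ s in {s : ℝ | 0 < s ∧ ENNReal.ofReal s < a},
            ENNReal.ofReal (|f s| ^ 2 * v s) := by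
  intro f hf
  rw [← lintegral_ofReal_mul_sq_withDensity hv hv0 hf, ENNReal.ofReal_mul (by norm_num),
    ENNReal.ofReal_ofNat]
  exact (setLIntegral_ofReal_sq_integral_le hu hv hv0 hf).trans
    (lintegral_sq_setLIntegral_Ioi_le ENNReal.ofReal_ne_top (measure_Iio_mul_measure_Ioi_le hA₂)
      (by fun_prop))

/-- dual Muckenhoupt sufficient condition, `p = 2`.
If `A₂ = sup_{0<t<a} (∫₀^t u)(∫_t^a v⁻¹)` is finite (i.e. `A₂` is an upper bound),
then for every measurable `f`,
`∫₀^a (∫_s^a f)² u(s) ds ≤ 4 A₂ ∫₀^a f(s)² v(s) ds`. -/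
theorem muckenhoupt_dual_sufficient (a : ℝ≥0∞) (ha : 0 < a) (u v : ℝ → ℝ)
    (hu : Measurable u) (hv : Measurable v)
    (hu0 : ∀ s, 0 < s → ENNReal.ofReal s < a → 0 ≤ u s)
    (hv0 : ∀ s, 0 < s → ENNReal.ofReal s < a → 0 < v s)
    (A₂ : ℝ)
    (hA₂ : ∀ t : ℝ, 0 < t → ENNReal.ofReal t < a →
      (∫⁻ s in Ioo (0 : ℝ) t, ENNReal.ofReal (u s)) *
        (∫⁻ s in {s : ℝ | t < s ∧ ENNReal.ofReal s < a}, ENNReal.ofReal ((v s)⁻¹))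
        ≤ ENNReal.ofReal A₂) :
    ∀ f : ℝ → ℝ, Measurable f →
      ∫⁻ s in {s : ℝ | 0 < s ∧ ENNReal.ofReal s < a},
          ENNReal.ofReal
            (|∫ t in {t : ℝ | s < t ∧ ENNReal.ofReal t < a}, f t| ^ 2 * u s)
        ≤ ENNReal.ofReal (4 * A₂) *
          ∫⁻ s in {s : ℝ | 0 < s ∧ ENNReal.ofReal s < a},
            ENNReal.ofReal (|f s| ^ 2 * v s) :=
  muckenhoupt_dual_sufficient_general a u v hu hv hv0 A₂ hA₂
end

section
/- Let N ≥ 5, let g : (0,∞) → [0,∞) be measurable with sup_{t>0} t^{4/N} g*(t) = M < ∞. Then there is a constant C = C(N) such that for all measurable f on (0,∞): ∫₀^∞ g*(s) (∫_s^∞ f(t) t^{-1+2/N} dt)² ds ≤ C M ∫₀^∞ f(s)² ds. -/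
open MeasureTheory Set
open scoped ENNReal

/-!
Put `δ = 1/2 - 2/N`, positive because `N ≥ 5`, so that `g*(s) ≤ M s^(2δ-1)` and the inner
exponent is `-1/2 - δ`. Cauchy–Schwarz with the splitting `t^(-1/2-δ) = t^(-δ/2) · t^(-1/2-δ/2)`
gives `(∫_s^∞ f t^(-1/2-δ))² ≤ (s^(-δ)/δ) ∫_s^∞ f² t^(-δ)`. After multiplying by `M s^(2δ-1)`
and exchanging the order of integration, `∫_0^t s^(δ-1) ds = t^δ/δ` cancels the weight `t^(-δ)`,
which leaves the constant `C = δ⁻²`.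
-/

/-- The one-dimensional decreasing rearrangement of `g` with respect to the measure `μ`:
`g*(t) = inf { s > 0 : μ{|g| > s} < t }`. -/
noncomputable def decRearr {α : Type*} [MeasurableSpace α] (μ : Measure α)
    (g : α → ℝ) (t : ℝ) : ℝ :=
  sInf {s : ℝ | 0 < s ∧ μ {x | s < |g x|} < ENNReal.ofReal t}

lemma enorm_sq_eq_ofReal_sq (x : ℝ) : ‖x‖ₑ ^ 2 = ENNReal.ofReal (x ^ 2) := by
  rw [Real.enorm_eq_ofReal_abs, ← ENNReal.ofReal_pow (abs_nonneg x), sq_abs]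

lemma enorm_integral_mul_sq_le {α : Type*} [MeasurableSpace α] {μ : Measure α} {f g : α → ℝ}
    (hf : AEMeasurable f μ) (hg : AEMeasurable g μ) :
    ‖∫ x, f x * g x ∂μ‖ₑ ^ 2 ≤ (∫⁻ x, ‖f x‖ₑ ^ 2 ∂μ) * ∫⁻ x, ‖g x‖ₑ ^ 2 ∂μ := by
  have holder := ENNReal.lintegral_mul_le_Lp_mul_Lq μ Real.HolderConjugate.two_two hf.enorm hg.enorm
  calc ‖∫ x, f x * g x ∂μ‖ₑ ^ 2 ≤ (∫⁻ x, ‖f x‖ₑ * ‖g x‖ₑ ∂μ) ^ 2 := by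
        gcongr
        simpa only [enorm_mul] using enorm_integral_le_lintegral_enorm (fun x => f x * g x)
    _ ≤ ((∫⁻ x, ‖f x‖ₑ ^ (2 : ℝ) ∂μ) ^ (1 / 2 : ℝ) *
          (∫⁻ x, ‖g x‖ₑ ^ (2 : ℝ) ∂μ) ^ (1 / 2 : ℝ)) ^ 2 := by
        gcongr
        simpa only [Pi.mul_apply] using holder
    _ = (∫⁻ x, ‖f x‖ₑ ^ 2 ∂μ) * ∫⁻ x, ‖g x‖ₑ ^ 2 ∂μ := by
        simp only [ENNReal.rpow_two, mul_pow, ← ENNReal.rpow_natCast, ← ENNReal.rpow_mul]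
        norm_num

lemma lintegral_Ioi_ofReal_rpow {a c : ℝ} (ha : a < -1) (hc : 0 < c) :
    ∫⁻ t in Ioi c, ENNReal.ofReal (t ^ a) = ENNReal.ofReal (c ^ (a + 1) / -(a + 1)) := by
  rw [← ofReal_integral_eq_lintegral_ofReal (integrableOn_Ioi_rpow_of_lt ha hc),
    integral_Ioi_rpow_of_lt ha hc, div_neg, neg_div]
  filter_upwards [ae_restrict_mem measurableSet_Ioi] with t ht
  exact Real.rpow_nonneg (hc.trans ht).le a

lemma lintegral_Ioo_zero_ofReal_rpow {a c : ℝ} (ha : -1 < a) (hc : 0 < c) :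
    ∫⁻ s in Ioo 0 c, ENNReal.ofReal (s ^ a) = ENNReal.ofReal (c ^ (a + 1) / (a + 1)) := by
  rw [← ofReal_integral_eq_lintegral_ofReal
    ((intervalIntegral.intervalIntegrable_rpow' ha).1.mono_set Ioo_subset_Ioc_self)]
  · rw [← integral_Ioc_eq_integral_Ioo, ← intervalIntegral.integral_of_le hc.le,
      integral_rpow (.inl ha), Real.zero_rpow (by linarith), sub_zero]
  filter_upwards [ae_restrict_mem measurableSet_Ioo] with s hs
  exact Real.rpow_nonneg hs.1.le a

lemma ofReal_sq_setIntegral_Ioi_rpow_le {f : ℝ → ℝ} (hf : Measurable f) {δ s : ℝ} (hδ : 0 < δ)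
    (hs : 0 < s) :
    ENNReal.ofReal ((∫ t in Ioi s, f t * t ^ (-1 / 2 - δ)) ^ 2) ≤
      ENNReal.ofReal (s ^ (-δ) / δ) * ∫⁻ t in Ioi s, ENNReal.ofReal (f t ^ 2 * t ^ (-δ)) := by
  have split : ∫ t in Ioi s, f t * t ^ (-1 / 2 - δ)
      = ∫ t in Ioi s, (f t * t ^ (-δ / 2)) * t ^ (-1 / 2 - δ / 2) :=
    setIntegral_congr_fun measurableSet_Ioi fun t ht => by
      rw [mul_assoc, ← Real.rpow_add (hs.trans ht)]; ring_nf
  have weighted_f : ∫⁻ t in Ioi s, ‖f t * t ^ (-δ / 2)‖ₑ ^ 2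
      = ∫⁻ t in Ioi s, ENNReal.ofReal (f t ^ 2 * t ^ (-δ)) :=
    setLIntegral_congr_fun measurableSet_Ioi fun t ht => by
      rw [enorm_sq_eq_ofReal_sq, mul_pow, ← Real.rpow_mul_natCast (hs.trans ht).le]; ring_nf
  have weight : ∫⁻ t in Ioi s, ‖t ^ (-1 / 2 - δ / 2)‖ₑ ^ 2 = ENNReal.ofReal (s ^ (-δ) / δ) := by
    rw [setLIntegral_congr_fun measurableSet_Ioi fun t ht => by
      rw [enorm_sq_eq_ofReal_sq, ← Real.rpow_mul_natCast (hs.trans ht).le],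
      lintegral_Ioi_ofReal_rpow (by linarith) hs]
    congr 2 <;> ring_nf
  rw [← enorm_sq_eq_ofReal_sq, split, mul_comm, ← weighted_f, ← weight]
  exact enorm_integral_mul_sq_le (by fun_prop) (by fun_prop)

lemma lintegral_Ioi_mul_lintegral_Ioi_eq {μ : Measure ℝ} [SFinite μ] {w H : ℝ → ℝ≥0∞}
    (hw : Measurable w) (hH : Measurable H) (a : ℝ) :
    ∫⁻ s in Ioi a, w s * ∫⁻ t in Ioi s, H t ∂μ ∂μ
      = ∫⁻ t in Ioi a, (∫⁻ s in Ioo a t, w s ∂μ) * H t ∂μ := by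
  set K : ℝ × ℝ → ℝ≥0∞ := {p | p.1 < p.2}.indicator fun p => w p.1 * H p.2
  have hK : Measurable K :=
    ((hw.comp measurable_fst).mul (hH.comp measurable_snd)).indicator
      (measurableSet_lt measurable_fst measurable_snd)
  have inner_t : ∀ s ∈ Ioi a, w s * ∫⁻ t in Ioi s, H t ∂μ = ∫⁻ t in Ioi a, K (s, t) ∂μ := by
    intro s hs
    have : (fun t => K (s, t)) = (Ioi s).indicator fun t => w s * H t := by
      ext t; simp [K, indicator_apply]
    rw [this, lintegral_indicator measurableSet_Ioi, Measure.restrict_restrict measurableSet_Ioi,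
      Ioi_inter_Ioi, sup_eq_left.2 hs.le, lintegral_const_mul _ hH]
  have inner_s : ∀ t ∈ Ioi a, (∫⁻ s in Ioo a t, w s ∂μ) * H t = ∫⁻ s in Ioi a, K (s, t) ∂μ := by
    intro t _
    have : (fun s => K (s, t)) = (Iio t).indicator fun s => w s * H t := by
      ext s; simp [K, indicator_apply]
    rw [this, lintegral_indicator measurableSet_Iio, Measure.restrict_restrict measurableSet_Iio,
      Iio_inter_Ioi, lintegral_mul_const _ hw]
  rw [setLIntegral_congr_fun measurableSet_Ioi inner_t,
    setLIntegral_congr_fun measurableSet_Ioi inner_s]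
  exact lintegral_lintegral_swap hK.aemeasurable

theorem lintegral_mul_sq_integral_Ioi_rpow_le {w f : ℝ → ℝ} {δ M : ℝ} (hδ : 0 < δ)
    (hw : ∀ s, 0 < s → w s ≤ M * s ^ (2 * δ - 1)) (hf : Measurable f) :
    ∫⁻ s in Ioi 0, ENNReal.ofReal (w s * (∫ t in Ioi s, f t * t ^ (-1 / 2 - δ)) ^ 2)
      ≤ ENNReal.ofReal (M / δ ^ 2) * ∫⁻ s in Ioi 0, ENNReal.ofReal (f s ^ 2) := by
  set H : ℝ → ℝ≥0∞ := fun t => ENNReal.ofReal (f t ^ 2 * t ^ (-δ))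
  have hH : Measurable H := by fun_prop
  have pointwise : ∀ s ∈ Ioi (0 : ℝ),
      ENNReal.ofReal (w s * (∫ t in Ioi s, f t * t ^ (-1 / 2 - δ)) ^ 2)
        ≤ ENNReal.ofReal (M / δ) * (ENNReal.ofReal (s ^ (δ - 1)) * ∫⁻ t in Ioi s, H t) := by
    intro s hs
    have hpow : 0 ≤ s ^ (-δ) := Real.rpow_nonneg hs.le _
    have exponents : s ^ (2 * δ - 1) * s ^ (-δ) = s ^ (δ - 1) := by
      rw [← Real.rpow_add hs]; ring_nf
    calc ENNReal.ofReal (w s * (∫ t in Ioi s, f t * t ^ (-1 / 2 - δ)) ^ 2)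
        ≤ ENNReal.ofReal (M * s ^ (2 * δ - 1)) *
            ENNReal.ofReal ((∫ t in Ioi s, f t * t ^ (-1 / 2 - δ)) ^ 2) := by
          rw [← ENNReal.ofReal_mul' (sq_nonneg _)]
          gcongr
          exact hw s hs
      _ ≤ ENNReal.ofReal (M * s ^ (2 * δ - 1)) *
            (ENNReal.ofReal (s ^ (-δ) / δ) * ∫⁻ t in Ioi s, H t) := by
          gcongr
          exact ofReal_sq_setIntegral_Ioi_rpow_le hf hδ hs
      _ = ENNReal.ofReal (M / δ * s ^ (δ - 1)) * ∫⁻ t in Ioi s, H t := by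
          rw [← mul_assoc, ← ENNReal.ofReal_mul' (by positivity), ← exponents]
          ring_nf
      _ = ENNReal.ofReal (M / δ) * (ENNReal.ofReal (s ^ (δ - 1)) * ∫⁻ t in Ioi s, H t) := by
          rw [ENNReal.ofReal_mul' (Real.rpow_nonneg hs.le _), mul_assoc]
  have inner_integral : ∀ t ∈ Ioi (0 : ℝ),
      (∫⁻ s in Ioo 0 t, ENNReal.ofReal (s ^ (δ - 1))) * H t
        = ENNReal.ofReal δ⁻¹ * ENNReal.ofReal (f t ^ 2) := by
    intro t ht
    rw [lintegral_Ioo_zero_ofReal_rpow (by linarith) ht, sub_add_cancel,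
      ← ENNReal.ofReal_mul (by have := Real.rpow_nonneg ht.le δ; positivity),
      ← ENNReal.ofReal_mul (by positivity)]
    congr 1
    rw [Real.rpow_neg ht.le]
    field_simp [(Real.rpow_pos_of_pos ht δ).ne']
  calc ∫⁻ s in Ioi 0, ENNReal.ofReal (w s * (∫ t in Ioi s, f t * t ^ (-1 / 2 - δ)) ^ 2)
      ≤ ∫⁻ s in Ioi 0, ENNReal.ofReal (M / δ) *
          (ENNReal.ofReal (s ^ (δ - 1)) * ∫⁻ t in Ioi s, H t) :=
        setLIntegral_mono' measurableSet_Ioi pointwise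
    _ = ENNReal.ofReal (M / δ) *
          ∫⁻ t in Ioi 0, (∫⁻ s in Ioo 0 t, ENNReal.ofReal (s ^ (δ - 1))) * H t := by
        rw [lintegral_const_mul' _ _ ENNReal.ofReal_ne_top, lintegral_Ioi_mul_lintegral_Ioi_eq
          (w := fun s => ENNReal.ofReal (s ^ (δ - 1))) (by fun_prop) hH]
    _ = ENNReal.ofReal (M / δ ^ 2) * ∫⁻ s in Ioi 0, ENNReal.ofReal (f s ^ 2) := by
        rw [setLIntegral_congr_fun measurableSet_Ioi inner_integral,
          lintegral_const_mul' _ _ ENNReal.ofReal_ne_top, ← mul_assoc,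
          ← ENNReal.ofReal_mul' (by positivity)]
        ring_nf

/-- Let `N ≥ 5` and `g : (0,∞) → [0,∞)` measurable with
`sup_{t>0} t^(4/N) g*(t) ≤ M < ∞`.  Then there is `C = C(N)` such that for all
measurable `f`, `∫₀^∞ g*(s) (∫_s^∞ f(t) t^(-1+2/N) dt)² ds ≤ C M ∫₀^∞ f² ds`. -/
theorem hardy_dual_weak_lorentz_weight (N : ℕ) (hN : 5 ≤ N) :
    ∃ C : ℝ, 0 < C ∧ ∀ (g : ℝ → ℝ) (M : ℝ), Measurable g → (∀ x ∈ Ioi (0 : ℝ), 0 ≤ g x) →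
      (∀ t : ℝ, 0 < t →
        t ^ (4 / (N : ℝ)) * decRearr (volume.restrict (Ioi (0 : ℝ))) g t ≤ M) →
      ∀ f : ℝ → ℝ, Measurable f →
        ∫⁻ s in Ioi (0 : ℝ),
            ENNReal.ofReal (decRearr (volume.restrict (Ioi (0 : ℝ))) g s *
              (∫ t in Ioi s, f t * t ^ (-1 + 2 / (N : ℝ))) ^ 2)
          ≤ ENNReal.ofReal (C * M) * ∫⁻ s in Ioi (0 : ℝ), ENNReal.ofReal (f s ^ 2) := by
  set δ : ℝ := 1 / 2 - 2 / N
  have hδ : 0 < δ := by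
    have : (5 : ℝ) ≤ N := by exact_mod_cast hN
    rw [sub_pos, div_lt_iff₀ (by positivity)]
    linarith
  refine ⟨(δ ^ 2)⁻¹, by positivity, fun g M _ _ hgM f hf => ?_⟩
  have decay : ∀ s, 0 < s →
      decRearr (volume.restrict (Ioi (0 : ℝ))) g s ≤ M * s ^ (2 * δ - 1) := by
    intro s hs
    rw [show 2 * δ - 1 = -(4 / N) by ring, Real.rpow_neg hs.le, ← div_eq_mul_inv,
      le_div_iff₀ (by positivity), mul_comm]
    exact hgM s hs
  rw [show -1 + 2 / (N : ℝ) = -1 / 2 - δ by ring, inv_mul_eq_div]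
  exact lintegral_mul_sq_integral_Ioi_rpow_le hδ decay hf
end

section
/- Let N ≥ 5, R ∈ (0,∞], and let g : B(0,R) → [0,∞) be radial and radially decreasing. Suppose there is C > 0 such that ∫ g u² ≤ C ∫ |Δu|² for the family of test functions u_r(x) = (r-|x|)² 1_{|x|≤r}, r ∈ (0,R). Then sup_{0<t<|B(0,R)|} t^{4/N} g**(t) < ∞, i.e., g ∈ L^{N/4,∞}(B(0,R)). -/
/-!
Testing the inequality on `u_r` with `r = |x|` bounds `g(x)`. From below, on `B(0, r/2)` radial
monotonicity gives `g ≥ g(x)` while `u_r ≥ (r/2)²`, so `∫ g u_r² ≥ g(x) (r/2)⁴ |B(0, r/2)|`.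
From above, `|Δu_r(y)| = |2N - 2r(N-1)/|y|| ≤ 2Nr/|y|` on `B(0, r)` and
`∫_{B(0,r)} |y|⁻² = N/(N-2) |B(0,1)| r^(N-2)`, so `∫ |Δu_r|² ≤ C₂ r^N`. Hence `g(x) ≤ K |x|⁻⁴`,
the superlevel set `{g > K ρ⁻⁴}` lies in `B(0, ρ)`, and `g*(s) ≤ A s^(-4/N)`. Averaging gives
`t^(4/N) g**(t) ≤ A / (1 - 4/N)`, finite as `N > 4`.
-/

open MeasureTheory Set
open scoped ENNReal

/-- The (pointwise) Laplacian `Δu(x) = ∑ i ∂²u/∂x_i²(x)`. -/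
noncomputable def lap {N : ℕ} (u : EuclideanSpace ℝ (Fin N) → ℝ)
    (x : EuclideanSpace ℝ (Fin N)) : ℝ :=
  ∑ i : Fin N, iteratedFDeriv ℝ 2 u x ![EuclideanSpace.single i 1, EuclideanSpace.single i 1]

open Metric Module
open scoped RealInnerProductSpace

noncomputable def sqBump {E : Type*} [Norm E] (r : ℝ) (x : E) : ℝ :=
  if ‖x‖ ≤ r then (r - ‖x‖) ^ 2 else 0

section Derivatives

open Filter Topology

variable {E : Type*} [NormedAddCommGroup E] [InnerProductSpace ℝ E] {x : E}

lemma hasFDerivAt_norm_of_ne_zero (hx : x ≠ 0) :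
    HasFDerivAt (‖·‖) (‖x‖⁻¹ • innerSL ℝ x) x := by
  have h := (hasStrictFDerivAt_norm_sq x).hasFDerivAt.sqrt (by positivity)
  simp only [Real.sqrt_sq (norm_nonneg _)] at h
  convert h using 1
  ext v
  simp only [smul_apply, coe_innerSL_apply, smul_eq_mul, one_div, mul_inv_rev,
    nsmul_eq_mul, Nat.cast_ofNat]
  field_simp

lemma hasFDerivAt_sub_norm_sq (r : ℝ) (hx : x ≠ 0) :
    HasFDerivAt (fun y : E => (r - ‖y‖) ^ 2) ((2 - 2 * r * ‖x‖⁻¹) • innerSL ℝ x) x := by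
  refine (((hasFDerivAt_norm_of_ne_zero hx).const_sub r).pow 2).congr_fderiv ?_
  ext v
  simp only [Nat.add_one_sub_one, pow_one, nsmul_eq_mul, Nat.cast_ofNat, smul_neg,
    neg_apply, smul_apply, coe_innerSL_apply, smul_eq_mul]
  field_simp
  ring

lemma iteratedFDeriv_two_sub_norm_sq_apply (r : ℝ) (hx : x ≠ 0) (v w : E) :
    iteratedFDeriv ℝ 2 (fun y : E => (r - ‖y‖) ^ 2) x ![v, w]
      = (2 - 2 * r / ‖x‖) * ⟪v, w⟫ + 2 * r / ‖x‖ ^ 3 * ⟪x, v⟫ * ⟪x, w⟫ := by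
  have hD : fderiv ℝ (fun y : E => (r - ‖y‖) ^ 2) =ᶠ[𝓝 x]
      fun y => (2 - 2 * r * ‖y‖⁻¹) • innerSL ℝ y := by
    filter_upwards [isOpen_ne.mem_nhds hx] with y hy
    exact (hasFDerivAt_sub_norm_sq r hy).fderiv
  have hinv := (hasDerivAt_inv (norm_ne_zero_iff.mpr hx)).comp_hasFDerivAt x
    (hasFDerivAt_norm_of_ne_zero hx)
  have hD2 : HasFDerivAt (fun y : E => (2 - 2 * r * ‖y‖⁻¹) • innerSL ℝ y) _ x :=
    ((hinv.const_mul (2 * r)).const_sub 2).smul (innerSL ℝ).hasFDerivAt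
  rw [iteratedFDeriv_two_apply, hD.fderiv_eq, hD2.fderiv]
  simp only [Function.comp_apply, neg_smul, smul_neg, neg_neg, Matrix.cons_val_zero,
    Matrix.cons_val_one, Matrix.cons_val_fin_one, add_apply, smul_apply,
    ContinuousLinearMap.smulRight_apply, coe_innerSL_apply, smul_eq_mul]
  -- `hD2` applies `innerSL ℝ` as an ℝ-linear map, which `coe_innerSL_apply` does not see
  change (2 - 2 * r * ‖x‖⁻¹) * ⟪v, w⟫ + _ = _
  field_simp

end Derivatives

section Laplacian

open Filter Topology

variable {N : ℕ} {r : ℝ} {x : EuclideanSpace ℝ (Fin N)}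

lemma lap_sqBump_of_norm_lt (hx : x ≠ 0) (hxr : ‖x‖ < r) :
    lap (sqBump r) x = 2 * N - 2 * r * (N - 1) / ‖x‖ := by
  have hev : sqBump r =ᶠ[𝓝 x] fun y => (r - ‖y‖) ^ 2 := by
    filter_upwards [(isOpen_lt continuous_norm continuous_const).mem_nhds hxr] with y hy
    exact if_pos hy.le
  have hterm : ∀ i, iteratedFDeriv ℝ 2 (sqBump r) x
      ![EuclideanSpace.single i 1, EuclideanSpace.single i 1]
        = (2 - 2 * r / ‖x‖) + 2 * r / ‖x‖ ^ 3 * x i ^ 2 := fun i => by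
    rw [(hev.iteratedFDeriv ℝ 2).eq_of_nhds, iteratedFDeriv_two_sub_norm_sq_apply r hx]
    simp [EuclideanSpace.inner_single_right, sq, mul_assoc]
  have hsum : ∑ i, x i ^ 2 = ‖x‖ ^ 2 := by
    simp [EuclideanSpace.norm_sq_eq]
  rw [lap, Finset.sum_congr rfl fun i _ => hterm i, Finset.sum_add_distrib, Finset.sum_const,
    ← Finset.mul_sum, hsum, Finset.card_univ, Fintype.card_fin, nsmul_eq_mul]
  field_simp
  ring

lemma lap_sqBump_of_lt_norm (hxr : r < ‖x‖) : lap (sqBump r) x = 0 := by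
  have hev : sqBump r =ᶠ[𝓝 x] fun _ => 0 := by
    filter_upwards [(isOpen_lt continuous_const continuous_norm).mem_nhds hxr] with y hy
    exact if_neg (not_le.mpr hy)
  simp [lap, (hev.iteratedFDeriv ℝ 2).eq_of_nhds]

lemma sq_lap_sqBump_le (hx : x ≠ 0) (hxr : ‖x‖ < r) :
    lap (sqBump r) x ^ 2 ≤ (2 * N * r) ^ 2 * (‖x‖ ^ 2)⁻¹ := by
  have hN : (1 : ℝ) ≤ N := by
    norm_cast
    exact Nat.pos_of_ne_zero fun hN => hx (by subst hN; exact Subsingleton.elim _ _)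
  have hrx : 1 ≤ r / ‖x‖ := by rw [le_div_iff₀ (norm_pos_iff.mpr hx)]; linarith
  rw [lap_sqBump_of_norm_lt hx hxr, ← inv_pow, ← mul_pow,
    show 2 * r * (N - 1) / ‖x‖ = 2 * (N - 1) * (r / ‖x‖) by ring,
    show 2 * N * r * ‖x‖⁻¹ = 2 * N * (r / ‖x‖) by ring]
  apply sq_le_sq' <;> nlinarith

end Laplacian

section InverseSquare

variable {E : Type*} [NormedAddCommGroup E] [InnerProductSpace ℝ E] [FiniteDimensional ℝ E]
  [MeasurableSpace E] [BorelSpace E] (μ : Measure E) [μ.IsAddHaarMeasure]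

lemma integrableOn_ball_inv_norm_sq (hE : 3 ≤ finrank ℝ E) (r : ℝ) :
    IntegrableOn (fun x : E => (‖x‖ ^ 2)⁻¹) (ball 0 r) μ := by
  have : Nontrivial E := Module.nontrivial_of_finrank_pos (R := ℝ) (by omega)
  rw [integrableOn_fun_norm_addHaar μ (f := fun y => (y ^ 2)⁻¹)]
  refine ((continuous_pow (finrank ℝ E - 3)).integrableOn_Icc (a := 0) (b := r)).mono_set
    Ioo_subset_Icc_self |>.congr_fun (fun y hy => ?_) measurableSet_Ioo
  have hy : y ≠ 0 := hy.1.ne'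
  simp only [smul_eq_mul]
  rw [show finrank ℝ E - 1 = (finrank ℝ E - 3) + 2 by omega, pow_add]
  field_simp

lemma integral_ball_inv_norm_sq (hE : 3 ≤ finrank ℝ E) {r : ℝ} (hr : 0 ≤ r) :
    ∫ x in ball (0 : E) r, (‖x‖ ^ 2)⁻¹ ∂μ
      = finrank ℝ E / (finrank ℝ E - 2) * μ.real (ball 0 1) * r ^ (finrank ℝ E - 2) := by
  have : Nontrivial E := Module.nontrivial_of_finrank_pos (R := ℝ) (by omega)
  obtain ⟨k, hk⟩ : ∃ k, finrank ℝ E = k + 3 := ⟨finrank ℝ E - 3, by omega⟩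
  have hradial :
      ∫ y in Ioi (0 : ℝ), y ^ (finrank ℝ E - 1) • (Iio r).indicator (fun y => (y ^ 2)⁻¹) y
        = r ^ (k + 1) / (k + 1) :=
    calc _ = ∫ y in Ioi (0 : ℝ), (Iio r).indicator (fun y => y ^ k) y := by
          refine setIntegral_congr_fun measurableSet_Ioi fun y (hy : 0 < y) => ?_
          by_cases hyr : y < r
          · simp only [indicator_of_mem (show y ∈ Iio r from hyr), smul_eq_mul, hk,
              show k + 3 - 1 = k + 2 from rfl, pow_add]
            field_simp
          · simp [indicator_of_notMem (show y ∉ Iio r from hyr)]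
      _ = ∫ y in 0..r, y ^ k := by
          rw [integral_indicator measurableSet_Iio, Measure.restrict_restrict measurableSet_Iio,
            Iio_inter_Ioi, intervalIntegral.integral_of_le hr, integral_Ioc_eq_integral_Ioo]
      _ = r ^ (k + 1) / (k + 1) := by simp [integral_pow]
  rw [← integral_indicator measurableSet_ball]
  convert integral_fun_norm_addHaar μ (fun y => (Iio r).indicator (fun y : ℝ => (y ^ 2)⁻¹) y)
    using 1
  · congr 1; ext x; simp [indicator]
  · rw [hradial, hk, nsmul_eq_mul, smul_eq_mul]
    push_cast
    ring

end InverseSquare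

lemma lintegral_sq_lap_sqBump_le {N : ℕ} {r : ℝ} (hN : 3 ≤ N) (hr : 0 < r) :
    ∫⁻ x : EuclideanSpace ℝ (Fin N), ENNReal.ofReal (lap (sqBump r) x ^ 2)
      ≤ ENNReal.ofReal
          (4 * N ^ 3 / (N - 2) * volume.real (ball (0 : EuclideanSpace ℝ (Fin N)) 1) * r ^ N) := by
  have hfin : finrank ℝ (EuclideanSpace ℝ (Fin N)) = N := finrank_euclideanSpace_fin
  have : Nontrivial (EuclideanSpace ℝ (Fin N)) :=
    Module.nontrivial_of_finrank_pos (R := ℝ) (by omega)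
  have hae : ∀ᵐ x : EuclideanSpace ℝ (Fin N), ENNReal.ofReal (lap (sqBump r) x ^ 2)
      ≤ (ball 0 r).indicator (fun y => ENNReal.ofReal ((2 * N * r) ^ 2 * (‖y‖ ^ 2)⁻¹)) x := by
    filter_upwards [compl_mem_ae_iff.mpr (measure_singleton (0 : EuclideanSpace ℝ (Fin N))),
      compl_mem_ae_iff.mpr (Measure.addHaar_sphere_of_ne_zero volume 0 hr.ne')] with x hx0 hxr
    rcases lt_or_gt_of_ne (show ‖x‖ ≠ r by simpa using hxr) with hlt | hgt
    · rw [indicator_of_mem (mem_ball_zero_iff.mpr hlt)]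
      exact ENNReal.ofReal_le_ofReal (sq_lap_sqBump_le hx0 hlt)
    · simp [lap_sqBump_of_lt_norm hgt]
  have hint : IntegrableOn (fun x : EuclideanSpace ℝ (Fin N) => (2 * N * r) ^ 2 * (‖x‖ ^ 2)⁻¹)
      (ball 0 r) :=
    (integrableOn_ball_inv_norm_sq volume (by rwa [hfin]) r).const_mul _
  calc ∫⁻ x, ENNReal.ofReal (lap (sqBump r) x ^ 2)
      ≤ ∫⁻ x in ball 0 r, ENNReal.ofReal ((2 * N * r) ^ 2 * (‖x‖ ^ 2)⁻¹) := by
        rw [← lintegral_indicator measurableSet_ball]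
        exact lintegral_mono_ae hae
    _ = ENNReal.ofReal (∫ x in ball 0 r, (2 * N * r) ^ 2 * (‖x‖ ^ 2)⁻¹) :=
        (ofReal_integral_eq_lintegral_ofReal hint (.of_forall fun x => by positivity)).symm
    _ = _ := by
        rw [integral_const_mul, integral_ball_inv_norm_sq volume (by rwa [hfin]) hr.le, hfin]
        obtain ⟨k, rfl⟩ : ∃ k, N = k + 2 := ⟨N - 2, by omega⟩
        congr 1
        push_cast
        ring

lemma le_setLIntegral_mul_sqBump_sq {E : Type*} [SeminormedAddCommGroup E] [MeasurableSpace E]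
    [OpensMeasurableSpace E] {μ : Measure E} {Ω : Set E} {g : E → ℝ} {r c : ℝ} (hc : 0 ≤ c)
    (hΩ : ball 0 (r / 2) ⊆ Ω) (hg : ∀ y ∈ ball (0 : E) (r / 2), c ≤ g y) :
    ENNReal.ofReal (c * (r / 2) ^ 4) * μ (ball 0 (r / 2))
      ≤ ∫⁻ x in Ω, ENNReal.ofReal (g x * sqBump r x ^ 2) ∂μ := by
  calc ENNReal.ofReal (c * (r / 2) ^ 4) * μ (ball 0 (r / 2))
      = ∫⁻ _ in ball 0 (r / 2), ENNReal.ofReal (c * (r / 2) ^ 4) ∂μ :=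
        (setLIntegral_const _ _).symm
    _ ≤ ∫⁻ x in ball 0 (r / 2), ENNReal.ofReal (g x * sqBump r x ^ 2) ∂μ := by
        refine setLIntegral_mono' measurableSet_ball fun y hy => ENNReal.ofReal_le_ofReal ?_
        have hy' : ‖y‖ < r / 2 := mem_ball_zero_iff.mp hy
        have hbump : (r / 2) ^ 4 ≤ sqBump r y ^ 2 := by
          rw [sqBump, if_pos (by linarith [norm_nonneg y]), ← pow_mul]
          exact pow_le_pow_left₀ (by linarith [norm_nonneg y]) (by linarith) 4
        exact mul_le_mul (hg y hy) hbump (by positivity) (hc.trans (hg y hy))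
    _ ≤ ∫⁻ x in Ω, ENNReal.ofReal (g x * sqBump r x ^ 2) ∂μ := lintegral_mono_set hΩ

lemma mul_pow_four_le_of_lintegral_le {N : ℕ} (hN : 3 ≤ N) {Ω : Set (EuclideanSpace ℝ (Fin N))}
    {g : EuclideanSpace ℝ (Fin N) → ℝ} {r c C : ℝ} (hr : 0 < r) (hc : 0 ≤ c) (hC : 0 ≤ C)
    (hΩ : ball 0 (r / 2) ⊆ Ω) (hg : ∀ y ∈ ball 0 (r / 2), c ≤ g y)
    (hineq : ∫⁻ x in Ω, ENNReal.ofReal (g x * sqBump r x ^ 2)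
      ≤ ENNReal.ofReal C * ∫⁻ x in Ω, ENNReal.ofReal (lap (sqBump r) x ^ 2)) :
    c * r ^ 4 ≤ 2 ^ (N + 6) * N ^ 3 / (N - 2) * C := by
  have : Nontrivial (EuclideanSpace ℝ (Fin N)) :=
    Module.nontrivial_of_finrank_pos (R := ℝ) (by rw [finrank_euclideanSpace_fin]; omega)
  set ω := volume.real (ball (0 : EuclideanSpace ℝ (Fin N)) 1)
  have hω : 0 < ω := ENNReal.toReal_pos (measure_ball_pos _ 0 one_pos).ne' measure_ball_lt_top.ne
  have hN2 : (0 : ℝ) < N - 2 := by rw [sub_pos]; exact_mod_cast (show 2 < N by omega)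
  have key : c * (r / 2) ^ 4 * ((r / 2) ^ N * ω) ≤ C * (4 * N ^ 3 / (N - 2) * ω * r ^ N) := by
    rw [← ENNReal.ofReal_le_ofReal_iff (by positivity)]
    calc ENNReal.ofReal (c * (r / 2) ^ 4 * ((r / 2) ^ N * ω))
        = ENNReal.ofReal (c * (r / 2) ^ 4)
            * volume (ball (0 : EuclideanSpace ℝ (Fin N)) (r / 2)) := by
          rw [Measure.addHaar_ball _ _ (by positivity), finrank_euclideanSpace_fin,
            ← ofReal_measureReal measure_ball_lt_top.ne, ← ENNReal.ofReal_mul (by positivity),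
            ← ENNReal.ofReal_mul (by positivity)]
      _ ≤ ∫⁻ x in Ω, ENNReal.ofReal (g x * sqBump r x ^ 2) :=
          le_setLIntegral_mul_sqBump_sq hc hΩ hg
      _ ≤ ENNReal.ofReal C * ∫⁻ x in Ω, ENNReal.ofReal (lap (sqBump r) x ^ 2) := hineq
      _ ≤ ENNReal.ofReal C * ENNReal.ofReal (4 * N ^ 3 / (N - 2) * ω * r ^ N) := by
          gcongr
          exact (setLIntegral_le_lintegral _ _).trans (lintegral_sq_lap_sqBump_le hN hr)
      _ = ENNReal.ofReal (C * (4 * N ^ 3 / (N - 2) * ω * r ^ N)) := (ENNReal.ofReal_mul hC).symm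
  have hP : 0 < (r / 2) ^ N * ω := by positivity
  refine le_of_mul_le_mul_right ?_ hP
  calc c * r ^ 4 * ((r / 2) ^ N * ω) = 16 * (c * (r / 2) ^ 4 * ((r / 2) ^ N * ω)) := by ring
    _ ≤ 16 * (C * (4 * N ^ 3 / (N - 2) * ω * r ^ N)) := by linarith
    _ = 2 ^ (N + 6) * N ^ 3 / (N - 2) * C * ((r / 2) ^ N * ω) := by
        rw [div_pow]
        field_simp
        ring

lemma decRearr_le_of_measure_lt {α : Type*} [MeasurableSpace α] {μ : Measure α} {g : α → ℝ}
    {a t : ℝ} (ha : 0 < a) (h : μ {x | a < |g x|} < ENNReal.ofReal t) : decRearr μ g t ≤ a :=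
  csInf_le ⟨0, fun _ hb => hb.1.le⟩ ⟨ha, h⟩

lemma decRearr_restrict_le_of_mul_norm_pow_le {E : Type*} [NormedAddCommGroup E]
    [NormedSpace ℝ E] [FiniteDimensional ℝ E] [Nontrivial E] [MeasurableSpace E] [BorelSpace E]
    (μ : Measure E) [μ.IsAddHaarMeasure] {Ω : Set E} (hΩ : MeasurableSet Ω) {g : E → ℝ}
    {K : ℝ} (hK : 0 < K) (p : ℕ) (hg : ∀ x ∈ Ω, x ≠ 0 → |g x| * ‖x‖ ^ p ≤ K) {s : ℝ}
    (hs : 0 < s) :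
    decRearr (μ.restrict Ω) g s
      ≤ K * (2 * μ.real (ball 0 1)) ^ ((p : ℝ) / finrank ℝ E)
          * s ^ (-((p : ℝ) / finrank ℝ E)) := by
  set n := finrank ℝ E
  set ω := μ.real (ball 0 1)
  have hω : 0 < ω := ENNReal.toReal_pos (measure_ball_pos μ 0 one_pos).ne' measure_ball_lt_top.ne
  have hβ : μ (ball 0 1) = ENNReal.ofReal ω := (ofReal_measureReal measure_ball_lt_top.ne).symm
  set ρ := (s / (2 * ω)) ^ ((1 : ℝ) / n)
  have hρ : 0 < ρ := by positivity
  have hρ_pow : ∀ m : ℕ, ρ ^ m = (s / (2 * ω)) ^ ((m : ℝ) / n) := fun m => by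
    rw [← Real.rpow_natCast, ← Real.rpow_mul (by positivity), one_div_mul_eq_div]
  have hsub : {x | K / ρ ^ p < |g x|} ∩ Ω ⊆ closedBall 0 ρ := by
    rintro x ⟨hx, hxΩ⟩
    rw [mem_closedBall_zero_iff]
    rcases eq_or_ne x 0 with rfl | hx0
    · simpa using hρ.le
    have hx' : 0 < ‖x‖ := norm_pos_iff.mpr hx0
    have : K / ρ ^ p < K / ‖x‖ ^ p :=
      hx.trans_le ((le_div_iff₀ (by positivity)).mpr (hg x hxΩ hx0))
    exact (lt_of_pow_lt_pow_left₀ p hρ.le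
      ((div_lt_div_iff_of_pos_left hK (by positivity) (by positivity)).mp this)).le
  have hmeas : μ.restrict Ω {x | K / ρ ^ p < |g x|} < ENNReal.ofReal s := by
    have hn : (n : ℝ) ≠ 0 := Nat.cast_ne_zero.mpr finrank_pos.ne'
    calc μ.restrict Ω {x | K / ρ ^ p < |g x|} ≤ μ (closedBall 0 ρ) := by
          rw [Measure.restrict_apply' hΩ]; exact measure_mono hsub
      _ = ENNReal.ofReal (s / 2) := by
          rw [Measure.addHaar_closedBall _ _ hρ.le, hρ_pow, div_self hn, Real.rpow_one, hβ,
            ← ENNReal.ofReal_mul (by positivity)]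
          congr 1
          field_simp
      _ < ENNReal.ofReal s := (ENNReal.ofReal_lt_ofReal_iff hs).mpr (by linarith)
  refine (decRearr_le_of_measure_lt (by positivity) hmeas).trans_eq ?_
  rw [hρ_pow, Real.div_rpow hs.le (by positivity), Real.rpow_neg hs.le]
  field_simp

lemma rpow_mul_average_le_of_le_mul_rpow_neg {f : ℝ → ℝ} {A q : ℝ} (hA : 0 ≤ A) (hq : q < 1)
    (hf : ∀ s, 0 < s → f s ≤ A * s ^ (-q)) {t : ℝ} (ht : 0 < t) :
    t ^ q * ((1 / t) * ∫ s in Ioc 0 t, f s) ≤ A / (1 - q) := by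
  have hq' : 0 < 1 - q := by linarith
  have hint : IntegrableOn (fun s : ℝ => A * s ^ (-q)) (Ioc 0 t) := by
    have := intervalIntegral.intervalIntegrable_rpow' (a := 0) (b := t) (r := -q) (by linarith)
    exact ((intervalIntegrable_iff_integrableOn_Ioc_of_le ht.le).mp this).const_mul A
  have hval : ∫ s in Ioc 0 t, A * s ^ (-q) = A * (t ^ (1 - q) / (1 - q)) := by
    rw [integral_const_mul, ← intervalIntegral.integral_of_le ht.le,
      integral_rpow (Or.inl (by linarith)), Real.zero_rpow (by linarith), neg_add_eq_sub]
    ring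
  have hbound : ∫ s in Ioc 0 t, f s ≤ A * (t ^ (1 - q) / (1 - q)) := by
    by_cases hfi : IntegrableOn f (Ioc 0 t)
    · exact hval ▸ setIntegral_mono_on hfi hint measurableSet_Ioc fun s hs => hf s hs.1
    · rw [integral_undef hfi]; positivity
  calc t ^ q * ((1 / t) * ∫ s in Ioc 0 t, f s)
      ≤ t ^ q * ((1 / t) * (A * (t ^ (1 - q) / (1 - q)))) := by gcongr
    _ = A / (1 - q) := by
        rw [Real.rpow_sub ht, Real.rpow_one]
        field_simp

theorem necessary_weak_lorentz_general (N : ℕ) (hN : 5 ≤ N) (R : ℝ≥0∞)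
    (g : EuclideanSpace ℝ (Fin N) → ℝ)
    (g₀ : ℝ → ℝ) (hrad : ∀ x, g x = g₀ ‖x‖) (hdec : AntitoneOn g₀ (Ici (0 : ℝ)))
    (hg0 : ∀ x, ENNReal.ofReal ‖x‖ < R → 0 ≤ g x)
    (C : ℝ) (hC : 0 < C)
    (hineq : ∀ r : ℝ, 0 < r → ENNReal.ofReal r < R →
      ∫⁻ x in {x : EuclideanSpace ℝ (Fin N) | ENNReal.ofReal ‖x‖ < R},
          ENNReal.ofReal (g x * ((if ‖x‖ ≤ r then (r - ‖x‖) ^ 2 else 0)) ^ 2)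
        ≤ ENNReal.ofReal C *
          ∫⁻ x in {x : EuclideanSpace ℝ (Fin N) | ENNReal.ofReal ‖x‖ < R},
            ENNReal.ofReal
              ((lap (fun y => if ‖y‖ ≤ r then (r - ‖y‖) ^ 2 else 0) x) ^ 2)) :
    ∃ M : ℝ, ∀ t : ℝ, 0 < t →
      ENNReal.ofReal t < volume {x : EuclideanSpace ℝ (Fin N) | ENNReal.ofReal ‖x‖ < R} →
      t ^ (4 / (N : ℝ)) *
          ((1 / t) * ∫ s in Ioc (0 : ℝ) t,
            decRearr
              (volume.restrict {x : EuclideanSpace ℝ (Fin N) | ENNReal.ofReal ‖x‖ < R})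
              g s)
        ≤ M := by
  set Ω := {x : EuclideanSpace ℝ (Fin N) | ENNReal.ofReal ‖x‖ < R}
  have hΩ : MeasurableSet Ω := measurableSet_lt (by fun_prop) measurable_const
  have : Nontrivial (EuclideanSpace ℝ (Fin N)) :=
    Module.nontrivial_of_finrank_pos (R := ℝ) (by rw [finrank_euclideanSpace_fin]; omega)
  set K : ℝ := 2 ^ (N + 6) * N ^ 3 / (N - 2) * C
  have hK : 0 < K := by
    have : (0 : ℝ) < N - 2 := by rw [sub_pos]; exact_mod_cast (show 2 < N by omega)
    positivity
  have hdecay : ∀ x ∈ Ω, x ≠ 0 → |g x| * ‖x‖ ^ 4 ≤ K := fun x hx hx0 => by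
    have hx' : 0 < ‖x‖ := norm_pos_iff.mpr hx0
    rw [abs_of_nonneg (hg0 x hx)]
    refine mul_pow_four_le_of_lintegral_le (by omega) hx' (hg0 x hx) hC.le ?_ ?_
      (hineq ‖x‖ hx' hx)
    · intro y hy
      exact (ENNReal.ofReal_le_ofReal (by linarith [mem_ball_zero_iff.mp hy])).trans_lt hx
    · intro y hy
      rw [hrad, hrad]
      exact hdec (norm_nonneg y) hx'.le (by linarith [mem_ball_zero_iff.mp hy])
  have hq : 4 / (N : ℝ) < 1 := by
    rw [div_lt_one (by positivity)]; exact_mod_cast (show 4 < N by omega)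
  refine ⟨K * (2 * volume.real (ball (0 : EuclideanSpace ℝ (Fin N)) 1)) ^ (4 / (N : ℝ))
    / (1 - 4 / N), fun t ht _ => rpow_mul_average_le_of_le_mul_rpow_neg (by positivity) hq
    (fun s hs => ?_) ht⟩
  simpa [finrank_euclideanSpace_fin] using
    decRearr_restrict_le_of_mul_norm_pow_le volume hΩ hK 4 hdecay hs

/-- Let `N ≥ 5`, `R ∈ (0,∞]`, `Ω = B(0,R)` and `g : Ω → [0,∞)` radial
and radially decreasing.  If the Hardy–Rellich inequality `∫ g u_r² ≤ C ∫ |Δu_r|²` holds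
for the test functions `u_r(x) = (r-|x|)² 1_{|x|≤r}`, `r ∈ (0,R)`, then
`sup_{0<t<|Ω|} t^(4/N) g**(t) < ∞`, i.e. `g ∈ L^{N/4,∞}(Ω)`. -/
theorem necessary_weak_lorentz (N : ℕ) (hN : 5 ≤ N) (R : ℝ≥0∞) (hR : 0 < R)
    (g : EuclideanSpace ℝ (Fin N) → ℝ) (hgm : Measurable g)
    (g₀ : ℝ → ℝ) (hrad : ∀ x, g x = g₀ ‖x‖) (hdec : AntitoneOn g₀ (Ici (0 : ℝ)))
    (hg0 : ∀ x, ENNReal.ofReal ‖x‖ < R → 0 ≤ g x)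
    (C : ℝ) (hC : 0 < C)
    (hineq : ∀ r : ℝ, 0 < r → ENNReal.ofReal r < R →
      ∫⁻ x in {x : EuclideanSpace ℝ (Fin N) | ENNReal.ofReal ‖x‖ < R},
          ENNReal.ofReal (g x * ((if ‖x‖ ≤ r then (r - ‖x‖) ^ 2 else 0)) ^ 2)
        ≤ ENNReal.ofReal C *
          ∫⁻ x in {x : EuclideanSpace ℝ (Fin N) | ENNReal.ofReal ‖x‖ < R},
            ENNReal.ofReal
              ((lap (fun y => if ‖y‖ ≤ r then (r - ‖y‖) ^ 2 else 0) x) ^ 2)) :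
    ∃ M : ℝ, ∀ t : ℝ, 0 < t →
      ENNReal.ofReal t < volume {x : EuclideanSpace ℝ (Fin N) | ENNReal.ofReal ‖x‖ < R} →
      t ^ (4 / (N : ℝ)) *
          ((1 / t) * ∫ s in Ioc (0 : ℝ) t,
            decRearr
              (volume.restrict {x : EuclideanSpace ℝ (Fin N) | ENNReal.ofReal ‖x‖ < R})
              g s)
        ≤ M :=
  necessary_weak_lorentz_general N hN R g g₀ hrad hdec hg0 C hC hineq
end

section
/- For every u ∈ C_c^∞(ℝ^N), N ≥ 1: ∫₀^∞ ∫_{S^{N-1}} r^{N-1} |∂²u/∂r²(r,ω)|² dS_ω dr ≤ ∫_{ℝ^N} |Δu(x)|² dx, where ∂²u/∂r² is the second radial derivative ∑_{i,j} (∂²u/∂x_i∂x_j)(x_i/|x|)(x_j/|x|). -/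
open MeasureTheory Set
open scoped ENNReal

section Aux

variable {N : ℕ}

lemma euclid_decomp (ω : EuclideanSpace ℝ (Fin N)) :
    ω = ∑ i, ω i • EuclideanSpace.single i 1 := by
  ext j
  have h : (∑ i, ω i • EuclideanSpace.single i 1) j
      = ∑ i, (ω i • EuclideanSpace.single i 1 : EuclideanSpace ℝ (Fin N)) j :=
    by rw [WithLp.ofLp_sum, Finset.sum_apply]
  rw [h]
  simp [EuclideanSpace.single_apply]

lemma bilin_sq_le (B : EuclideanSpace ℝ (Fin N) →L[ℝ] EuclideanSpace ℝ (Fin N) →L[ℝ] ℝ)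
    (ω : EuclideanSpace ℝ (Fin N)) (hω : ‖ω‖ = 1) :
    (B ω ω)^2 ≤ ∑ i, ∑ j, (B (EuclideanSpace.single i 1) (EuclideanSpace.single j 1))^2 := by
  have hexp : B ω ω = ∑ i, ∑ j, (ω i * ω j) *
      B (EuclideanSpace.single i 1) (EuclideanSpace.single j 1) := by
    conv_lhs => rw [euclid_decomp ω]
    simp only [map_sum, ContinuousLinearMap.sum_apply]
    rw [Finset.sum_comm]
    refine Finset.sum_congr rfl fun i _ => Finset.sum_congr rfl fun j _ => ?_
    simp only [ContinuousLinearMap.map_smul, ContinuousLinearMap.smul_apply, smul_eq_mul]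
    ring
  have hnorm : ∑ i, ω i ^ 2 = 1 := by
    have := EuclideanSpace.norm_eq ω
    rw [hω] at this
    have h2 := Real.sqrt_eq_one.mp this.symm
    simpa [sq_abs] using h2
  rw [hexp, ← Finset.sum_product']
  calc (∑ p ∈ Finset.univ ×ˢ Finset.univ, (ω p.1 * ω p.2) *
          B (EuclideanSpace.single p.1 1) (EuclideanSpace.single p.2 1))^2
      ≤ (∑ p ∈ Finset.univ ×ˢ Finset.univ, (ω p.1 * ω p.2)^2) *
        (∑ p ∈ Finset.univ ×ˢ Finset.univ,
          (B (EuclideanSpace.single p.1 1) (EuclideanSpace.single p.2 1))^2) :=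
        Finset.sum_mul_sq_le_sq_mul_sq _ _ _
    _ = ∑ i, ∑ j, (B (EuclideanSpace.single i 1) (EuclideanSpace.single j 1))^2 := by
        rw [Finset.sum_product, Finset.sum_product]
        have h1 : (∑ i : Fin N, ∑ j : Fin N, (ω i * ω j)^2) = 1 := by
          simp only [mul_pow, ← Finset.mul_sum, ← Finset.sum_mul, hnorm, mul_one, one_mul]
        rw [h1, one_mul]

lemma fderiv_apply_const' {f : EuclideanSpace ℝ (Fin N) → (EuclideanSpace ℝ (Fin N) →L[ℝ] ℝ)}
    (hf : Differentiable ℝ f) (w x : EuclideanSpace ℝ (Fin N)) :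
    fderiv ℝ (fun y => f y w) x = (fderiv ℝ f x).flip w := by
  rw [fderiv_clm_apply (hf x) (differentiableAt_const w)]
  simp

lemma hcs_apply {f : EuclideanSpace ℝ (Fin N) → (EuclideanSpace ℝ (Fin N) →L[ℝ] ℝ)}
    (hf : HasCompactSupport f) (w : EuclideanSpace ℝ (Fin N)) :
    HasCompactSupport (fun y => f y w) :=
  hf.comp_left (g := fun L : EuclideanSpace ℝ (Fin N) →L[ℝ] ℝ => L w) rfl

lemma ibp_step (f g : EuclideanSpace ℝ (Fin N) → ℝ)
    (hf : ContDiff ℝ (⊤ : ℕ∞) f) (hg : ContDiff ℝ (⊤ : ℕ∞) g)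
    (hfc : HasCompactSupport f) (v : EuclideanSpace ℝ (Fin N)) :
    ∫ x, f x * fderiv ℝ g x v = - ∫ x, fderiv ℝ f x v * g x := by
  have hg' : Continuous fun x => fderiv ℝ g x v :=
    ((hg.fderiv_right (m := (⊤ : ℕ∞)) (by simp)).continuous.clm_apply continuous_const)
  have hf' : Continuous fun x => fderiv ℝ f x v :=
    ((hf.fderiv_right (m := (⊤ : ℕ∞)) (by simp)).continuous.clm_apply continuous_const)
  have hfc' : HasCompactSupport fun x => fderiv ℝ f x v :=
    (hfc.fderiv ℝ).comp_left (g := fun L : EuclideanSpace ℝ (Fin N) →L[ℝ] ℝ => L v) rfl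
  exact integral_mul_fderiv_eq_neg_fderiv_mul_of_integrable
    ((hf'.mul hg.continuous).integrable_of_hasCompactSupport (hfc'.mul_right))
    ((hf.continuous.mul hg').integrable_of_hasCompactSupport (hfc.mul_right))
    ((hf.continuous.mul hg.continuous).integrable_of_hasCompactSupport (hfc.mul_right))
    (fun x _ => hf.differentiable (by simp) x) (fun x _ => hg.differentiable (by simp) x)

lemma key_ibp (u : EuclideanSpace ℝ (Fin N) → ℝ) (hu : ContDiff ℝ (⊤ : ℕ∞) u)
    (hsupp : HasCompactSupport u) (i j : Fin N) :
    ∫ x, (fderiv ℝ (fderiv ℝ u) x (EuclideanSpace.single i 1) (EuclideanSpace.single j 1))^2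
      = ∫ x, (fderiv ℝ (fderiv ℝ u) x (EuclideanSpace.single i 1) (EuclideanSpace.single i 1))
           * (fderiv ℝ (fderiv ℝ u) x (EuclideanSpace.single j 1) (EuclideanSpace.single j 1)) := by
  set e : Fin N → EuclideanSpace ℝ (Fin N) := fun a => EuclideanSpace.single a 1 with he
  have hu1 : ContDiff ℝ (⊤ : ℕ∞) (fderiv ℝ u) := hu.fderiv_right (m := (⊤ : ℕ∞)) (by simp)
  have hc1 : HasCompactSupport (fderiv ℝ u) := hsupp.fderiv ℝ
  set ua : Fin N → EuclideanSpace ℝ (Fin N) → ℝ := fun a y => fderiv ℝ u y (e a) with hua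
  have hua_cd : ∀ a, ContDiff ℝ (⊤ : ℕ∞) (ua a) := fun a => hu1.clm_apply contDiff_const
  have hua_cs : ∀ a, HasCompactSupport (ua a) := fun a => hcs_apply hc1 (e a)
  have hua_fd : ∀ a x, fderiv ℝ (ua a) x = (fderiv ℝ (fderiv ℝ u) x).flip (e a) :=
    fun a x => fderiv_apply_const' (hu1.differentiable (by simp)) (e a) x
  have symm2 : ∀ (f : EuclideanSpace ℝ (Fin N) → ℝ), ContDiff ℝ (⊤ : ℕ∞) f →
      ∀ x v w, fderiv ℝ (fderiv ℝ f) x v w = fderiv ℝ (fderiv ℝ f) x w v := by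
    intro f hf x v w
    exact second_derivative_symmetric
      (fun y => (hf.differentiable (by simp) y).hasFDerivAt)
      (((hf.fderiv_right (m := (⊤ : ℕ∞)) (by simp)).differentiable (by simp) x).hasFDerivAt) v w
  set d : Fin N → Fin N → EuclideanSpace ℝ (Fin N) → ℝ :=
    fun a b x => fderiv ℝ (fderiv ℝ u) x (e a) (e b) with hd
  have hd_eq : ∀ a b, d a b = fun y => fderiv ℝ (ua a) y (e b) := by
    intro a b; funext y
    rw [hua_fd a y]
    simp only [ContinuousLinearMap.flip_apply]
    exact (symm2 u hu y (e b) (e a)).symm ▸ rfl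
  have hd_cd : ∀ a b, ContDiff ℝ (⊤ : ℕ∞) (d a b) := by
    intro a b; rw [hd_eq]
    exact ((hua_cd a).fderiv_right (m := (⊤ : ℕ∞)) (by simp)).clm_apply contDiff_const
  have hd_cs : ∀ a b, HasCompactSupport (d a b) := by
    intro a b; rw [hd_eq]
    exact hcs_apply ((hua_cs a).fderiv ℝ) (e b)
  have hthird : ∀ x, fderiv ℝ (d i j) x (e i) = fderiv ℝ (d i i) x (e j) := by
    intro x
    rw [hd_eq i j, hd_eq i i,
      fderiv_apply_const'
        (((hua_cd i).fderiv_right (m := (⊤ : ℕ∞)) (by simp)).differentiable (by simp)) (e j) x,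
      fderiv_apply_const'
        (((hua_cd i).fderiv_right (m := (⊤ : ℕ∞)) (by simp)).differentiable (by simp)) (e i) x]
    simp only [ContinuousLinearMap.flip_apply]
    exact symm2 (ua i) (hua_cd i) x (e i) (e j)
  have hstep1 : ∫ x, (d i j x)^2 = - ∫ x, fderiv ℝ (d i j) x (e i) * ua j x := by
    have h := ibp_step (d i j) (ua j) (hd_cd i j) (hua_cd j) (hd_cs i j) (e i)
    have h2 : ∀ x, fderiv ℝ (ua j) x (e i) = d i j x := by
      intro x; rw [hua_fd j x]; rfl
    calc ∫ x, (d i j x)^2 = ∫ x, d i j x * fderiv ℝ (ua j) x (e i) := by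
          congr 1; funext x; rw [h2 x]; ring
      _ = - ∫ x, fderiv ℝ (d i j) x (e i) * ua j x := h
  have hstep3 : ∫ x, d i i x * fderiv ℝ (ua j) x (e j)
      = - ∫ x, fderiv ℝ (d i i) x (e j) * ua j x :=
    ibp_step (d i i) (ua j) (hd_cd i i) (hua_cd j) (hd_cs i i) (e j)
  have h3 : ∀ x, fderiv ℝ (ua j) x (e j) = d j j x := by
    intro x; rw [hua_fd j x]; rfl
  calc ∫ x, (d i j x)^2
      = - ∫ x, fderiv ℝ (d i j) x (e i) * ua j x := hstep1
    _ = - ∫ x, fderiv ℝ (d i i) x (e j) * ua j x := by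
        congr 1; congr 1; funext x; rw [hthird x]
    _ = ∫ x, d i i x * fderiv ℝ (ua j) x (e j) := by rw [hstep3]
    _ = ∫ x, d i i x * d j j x := by congr 1; funext x; rw [h3 x]

end Aux

/-- For `u ∈ C_c^∞(ℝ^N)`,
`∫₀^∞ ∫_{S^{N-1}} r^{N-1} |∂²u/∂r²(rω)|² dS_ω dr ≤ ∫_{ℝ^N} |Δu|²`,
where `∂²u/∂r²` at `x = rω` is the Hessian contraction `⟨D²u(x) ω, ω⟩` and `dS` is the
surface measure on the unit sphere. -/
theorem radial_second_derivative_bound (N : ℕ) (hN : 1 ≤ N)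
    (u : EuclideanSpace ℝ (Fin N) → ℝ) (hu : ContDiff ℝ (⊤ : ℕ∞) u)
    (hsupp : HasCompactSupport u) :
    ∫⁻ r in Ioi (0 : ℝ),
        ∫⁻ ω : Metric.sphere (0 : EuclideanSpace ℝ (Fin N)) 1,
          ENNReal.ofReal (r ^ (N - 1) *
            (iteratedFDeriv ℝ 2 u (r • (ω : EuclideanSpace ℝ (Fin N)))
              ![(ω : EuclideanSpace ℝ (Fin N)), (ω : EuclideanSpace ℝ (Fin N))]) ^ 2)
          ∂((volume : Measure (EuclideanSpace ℝ (Fin N))).toSphere)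
      ≤ ∫⁻ x, ENNReal.ofReal ((lap u x) ^ 2) := by
  classical
  have hu' : ContDiff ℝ (⊤ : ℕ∞) u := hu.of_le (by simp)
  set e : Fin N → EuclideanSpace ℝ (Fin N) := fun a => EuclideanSpace.single a 1 with he
  set d : Fin N → Fin N → EuclideanSpace ℝ (Fin N) → ℝ :=
    fun a b x => fderiv ℝ (fderiv ℝ u) x (e a) (e b) with hd
  set S : EuclideanSpace ℝ (Fin N) → ℝ := fun x => ∑ i, ∑ j, (d i j x)^2 with hS
  have hu2 : ContDiff ℝ (⊤ : ℕ∞) (fderiv ℝ (fderiv ℝ u)) :=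
    (hu'.fderiv_right (m := (⊤ : ℕ∞)) (by simp)).fderiv_right (m := (⊤ : ℕ∞)) (by simp)
  have hc2 : HasCompactSupport (fderiv ℝ (fderiv ℝ u)) := (hsupp.fderiv ℝ).fderiv ℝ
  have hd_cont : ∀ a b, Continuous (d a b) := fun a b =>
    (hu2.continuous.clm_apply continuous_const).clm_apply continuous_const
  have hd_cs : ∀ a b, HasCompactSupport (d a b) := fun a b =>
    hc2.comp_left
      (g := fun L : EuclideanSpace ℝ (Fin N) →L[ℝ]
        (EuclideanSpace ℝ (Fin N) →L[ℝ] ℝ) => L (e a) (e b)) rfl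
  -- identify `lap` with the sum of diagonal second partials
  have hlap : ∀ x, lap u x = ∑ i, d i i x := by
    intro x
    unfold lap
    refine Finset.sum_congr rfl fun i _ => ?_
    rw [iteratedFDeriv_two_apply]
    simp [hd, he]
  -- integrability helpers
  have hint_sq : ∀ a b c f, Integrable (fun x => d a b x * d c f x) := by
    intro a b c f
    exact ((hd_cont a b).mul (hd_cont c f)).integrable_of_hasCompactSupport
      ((hd_cs a b).mul_right)
  -- the main L² identity : ∫ S = ∫ (lap u)²
  have hkey : ∫ x, S x = ∫ x, (lap u x)^2 := by
    have h1 : ∫ x, S x = ∑ i : Fin N, ∑ j : Fin N, ∫ x, (d i j x)^2 := by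
      rw [hS]
      rw [integral_finset_sum _ (fun i _ => integrable_finset_sum _
        (fun j _ => by simpa [sq] using hint_sq i j i j))]
      exact Finset.sum_congr rfl fun i _ =>
        integral_finset_sum _ (fun j _ => by simpa [sq] using hint_sq i j i j)
    have h2 : ∀ i j : Fin N, ∫ x, (d i j x)^2 = ∫ x, d i i x * d j j x := fun i j =>
      key_ibp u hu' hsupp i j
    have h3 : ∫ x, (lap u x)^2 = ∑ i : Fin N, ∑ j : Fin N, ∫ x, d i i x * d j j x := by
      have hexp : ∀ x, (lap u x)^2 = ∑ i : Fin N, ∑ j : Fin N, d i i x * d j j x := by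
        intro x
        rw [hlap x, sq, Finset.sum_mul_sum]
      rw [integral_congr_ae (Filter.Eventually.of_forall hexp)]
      rw [integral_finset_sum _ (fun i _ => integrable_finset_sum _
        (fun j _ => hint_sq i i j j))]
      exact Finset.sum_congr rfl fun i _ =>
        integral_finset_sum _ (fun j _ => hint_sq i i j j)
    rw [h1, h3]
    exact Finset.sum_congr rfl fun i _ => Finset.sum_congr rfl fun j _ => h2 i j
  -- continuity / support / integrability of S and (lap u)^2
  have hS_cont : Continuous S := by
    apply continuous_finset_sum
    intro i _
    exact continuous_finset_sum _ fun j _ => (hd_cont i j).pow 2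
  have hS_cs : HasCompactSupport S := by
    apply HasCompactSupport.intro hc2
    intro x hx
    have h0 : fderiv ℝ (fderiv ℝ u) x = 0 := image_eq_zero_of_notMem_tsupport hx
    simp [hS, hd, h0]
  have hS_int : Integrable S := hS_cont.integrable_of_hasCompactSupport hS_cs
  have hlap_cont : Continuous (fun x => (lap u x)^2) := by
    have : Continuous (lap u) := by
      have : lap u = fun x => ∑ i, d i i x := funext hlap
      rw [this]
      exact continuous_finset_sum _ fun i _ => hd_cont i i
    exact this.pow 2
  have hlap_cs : HasCompactSupport (fun x => (lap u x)^2) := by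
    apply HasCompactSupport.intro hc2
    intro x hx
    have h0 : fderiv ℝ (fderiv ℝ u) x = 0 := image_eq_zero_of_notMem_tsupport hx
    simp [hlap x, hd, h0]
  have hlap_int : Integrable (fun x => (lap u x)^2) :=
    hlap_cont.integrable_of_hasCompactSupport hlap_cs
  -- reduce RHS to `ofReal (∫ S)`
  have hRHS : ∫⁻ x, ENNReal.ofReal (S x) = ∫⁻ x, ENNReal.ofReal ((lap u x)^2) := by
    rw [← ofReal_integral_eq_lintegral_ofReal hS_int
        (Filter.Eventually.of_forall fun x => by positivity),
      ← ofReal_integral_eq_lintegral_ofReal hlap_int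
        (Filter.Eventually.of_forall fun x => by positivity),
      hkey]
  rw [← hRHS]
  -- now the polar coordinates computation
  set μ := (volume : Measure (EuclideanSpace ℝ (Fin N))) with hμ
  set F : Metric.sphere (0 : EuclideanSpace ℝ (Fin N)) 1 × Ioi (0 : ℝ) → ℝ≥0∞ :=
    fun p => ENNReal.ofReal
      ((iteratedFDeriv ℝ 2 u ((p.2 : ℝ) • (p.1 : EuclideanSpace ℝ (Fin N)))
        ![(p.1 : EuclideanSpace ℝ (Fin N)), (p.1 : EuclideanSpace ℝ (Fin N))]) ^ 2) with hF
  have hFcont : Continuous F := by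
    have h2cont : Continuous (fun x => iteratedFDeriv ℝ 2 u x) :=
      hu.continuous_iteratedFDeriv (WithTop.coe_le_coe.mpr le_top)
    have hsm : Continuous fun p : Metric.sphere (0 : EuclideanSpace ℝ (Fin N)) 1 × Ioi (0 : ℝ) =>
        (p.2 : ℝ) • (p.1 : EuclideanSpace ℝ (Fin N)) :=
      (continuous_subtype_val.comp continuous_snd).smul
        (continuous_subtype_val.comp continuous_fst)
    have harg : Continuous fun p : Metric.sphere (0 : EuclideanSpace ℝ (Fin N)) 1 × Ioi (0 : ℝ) =>
        ![(p.1 : EuclideanSpace ℝ (Fin N)), (p.1 : EuclideanSpace ℝ (Fin N))] := by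
      apply continuous_pi
      intro i
      fin_cases i <;> exact continuous_subtype_val.comp continuous_fst
    exact ENNReal.continuous_ofReal.comp
      ((ContinuousEval.continuous_eval.comp (((h2cont.comp hsm).prodMk harg))).pow 2)
  have hFmeas : Measurable F := hFcont.measurable
  -- Step 1 : pull the power of r out as a density
  have step1 : (∫⁻ r in Ioi (0 : ℝ),
        ∫⁻ ω : Metric.sphere (0 : EuclideanSpace ℝ (Fin N)) 1,
          ENNReal.ofReal (r ^ (N - 1) *
            (iteratedFDeriv ℝ 2 u (r • (ω : EuclideanSpace ℝ (Fin N)))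
              ![(ω : EuclideanSpace ℝ (Fin N)), (ω : EuclideanSpace ℝ (Fin N))]) ^ 2) ∂μ.toSphere)
      = ∫⁻ r in Ioi (0 : ℝ), ENNReal.ofReal (r ^ (N - 1)) *
          ∫⁻ ω : Metric.sphere (0 : EuclideanSpace ℝ (Fin N)) 1,
            ENNReal.ofReal ((iteratedFDeriv ℝ 2 u (r • (ω : EuclideanSpace ℝ (Fin N)))
              ![(ω : EuclideanSpace ℝ (Fin N)), (ω : EuclideanSpace ℝ (Fin N))]) ^ 2)
            ∂μ.toSphere := by
    refine setLIntegral_congr_fun measurableSet_Ioi ?_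
    intro r hr
    beta_reduce
    rw [← lintegral_const_mul' _ _ ENNReal.ofReal_ne_top]
    refine lintegral_congr fun ω => ?_
    rw [← ENNReal.ofReal_mul (pow_nonneg (le_of_lt hr) _)]
  rw [step1]
  -- Step 2 : rewrite as an integral over the subtype with the density measure
  have step2 : (∫⁻ r in Ioi (0 : ℝ), ENNReal.ofReal (r ^ (N - 1)) *
          ∫⁻ ω : Metric.sphere (0 : EuclideanSpace ℝ (Fin N)) 1,
            ENNReal.ofReal ((iteratedFDeriv ℝ 2 u (r • (ω : EuclideanSpace ℝ (Fin N)))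
              ![(ω : EuclideanSpace ℝ (Fin N)), (ω : EuclideanSpace ℝ (Fin N))]) ^ 2)
            ∂μ.toSphere)
      = ∫⁻ r : Ioi (0 : ℝ), ∫⁻ ω, F (ω, r) ∂μ.toSphere
          ∂(Measure.volumeIoiPow (N - 1)) := by
    rw [← lintegral_subtype_comap measurableSet_Ioi]
    rw [Measure.volumeIoiPow,
      lintegral_withDensity_eq_lintegral_mul _
        (by exact (measurable_subtype_coe.pow_const _).ennreal_ofReal)
        (hFmeas.lintegral_prod_left')]
    rfl
  rw [step2]
  -- Step 3 : swap the two integrals and identify with an integral over the product measure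
  have step3 : (∫⁻ r : Ioi (0 : ℝ), ∫⁻ ω, F (ω, r) ∂μ.toSphere
          ∂(Measure.volumeIoiPow (N - 1)))
      = ∫⁻ p, F p ∂(μ.toSphere.prod (Measure.volumeIoiPow (N - 1))) := by
    have hswap : AEMeasurable
        (Function.uncurry fun (r : Ioi (0 : ℝ))
          (ω : Metric.sphere (0 : EuclideanSpace ℝ (Fin N)) 1) => F (ω, r))
        ((Measure.volumeIoiPow (N - 1)).prod μ.toSphere) :=
      Measurable.aemeasurable (by exact hFmeas.comp measurable_swap)
    rw [lintegral_lintegral_swap hswap]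
    exact (lintegral_prod F hFmeas.aemeasurable).symm
  rw [step3]
  -- Step 4 : use the polar-coordinates measure-preserving map
  have hfinrank : Module.finrank ℝ (EuclideanSpace ℝ (Fin N)) = N := finrank_euclideanSpace_fin
  have step4 : (∫⁻ p, F p ∂(μ.toSphere.prod (Measure.volumeIoiPow (N - 1))))
      = ∫⁻ x : ({0}ᶜ : Set (EuclideanSpace ℝ (Fin N))),
          F (homeomorphUnitSphereProd (EuclideanSpace ℝ (Fin N)) x)
          ∂(Measure.comap Subtype.val μ) := by
    have := (μ.measurePreserving_homeomorphUnitSphereProd).lintegral_comp hFmeas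
    rw [hfinrank] at this
    exact this.symm
  rw [step4]
  -- Step 5 : pointwise bound by S
  have step5 : (∫⁻ x : ({0}ᶜ : Set (EuclideanSpace ℝ (Fin N))),
          F (homeomorphUnitSphereProd (EuclideanSpace ℝ (Fin N)) x)
          ∂(Measure.comap Subtype.val μ))
      ≤ ∫⁻ x : ({0}ᶜ : Set (EuclideanSpace ℝ (Fin N))), ENNReal.ofReal (S (x : EuclideanSpace ℝ (Fin N)))
          ∂(Measure.comap Subtype.val μ) := by
    refine lintegral_mono fun x => ?_
    have hx0 : (x : EuclideanSpace ℝ (Fin N)) ≠ 0 := x.2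
    set ω : EuclideanSpace ℝ (Fin N) := ‖(x : EuclideanSpace ℝ (Fin N))‖⁻¹ • (x : EuclideanSpace ℝ (Fin N)) with hω
    have hωnorm : ‖ω‖ = 1 := by
      rw [hω, norm_smul, norm_inv, norm_norm, inv_mul_cancel₀ (norm_ne_zero_iff.2 hx0)]
    have hback : ‖(x : EuclideanSpace ℝ (Fin N))‖ • ω = (x : EuclideanSpace ℝ (Fin N)) := by
      rw [hω, smul_inv_smul₀ (norm_ne_zero_iff.2 hx0)]
    have hFx : F (homeomorphUnitSphereProd (EuclideanSpace ℝ (Fin N)) x)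
        = ENNReal.ofReal ((fderiv ℝ (fderiv ℝ u) (x : EuclideanSpace ℝ (Fin N)) ω ω) ^ 2) := by
      rw [hF]
      simp only [homeomorphUnitSphereProd_apply_fst_coe, homeomorphUnitSphereProd_apply_snd_coe]
      rw [← hω, hback, iteratedFDeriv_two_apply]
      simp
    rw [hFx]
    refine ENNReal.ofReal_le_ofReal ?_
    have := bilin_sq_le (fderiv ℝ (fderiv ℝ u) (x : EuclideanSpace ℝ (Fin N))) ω hωnorm
    simpa [hS, hd, he] using this
  refine step5.trans ?_
  -- Step 6 : compare with the full-space integral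
  rw [lintegral_subtype_comap (measurableSet_singleton (0 : EuclideanSpace ℝ (Fin N))).compl (fun x => ENNReal.ofReal (S x))]
  exact setLIntegral_le_lintegral _ _
end

section
/- Let Ω ⊂ ℝ^N be bounded and measurable with |Ω| < ∞, and let f : Ω → ℝ be measurable with decreasing rearrangement f*. Then sup_{0<t<|Ω|} t log(|Ω|/t) f**(t) ≤ sup_{0<t<|Ω|} t [log(|Ω|/t)]² f*(t), where f**(t) = (1/t)∫₀^t f*(s) ds. -/
open MeasureTheory Set
open scoped ENNReal

/-!
Pointwise, `s (log (V/s))² f*(s) ≤ M` gives `f*(s) ≤ M / (s (log (V/s))²)`, and the right-hand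
side has the explicit primitive `M / log (V/s)`, which tends to `0` as `s → 0⁺`. Hence
`∫₀ᵗ f* ≤ M / log (V/t)`, which is the claim after multiplying by `log (V/t)`.
-/

open Filter Topology

theorem decRearr_nonneg {α : Type*} [MeasurableSpace α] (μ : Measure α) (g : α → ℝ) (t : ℝ) :
    0 ≤ decRearr μ g t :=
  Real.sInf_nonneg fun _ hs => hs.1.le

namespace Real

theorem tendsto_inv_log_const_div_nhdsGT_zero {V : ℝ} (hV : 0 < V) :
    Tendsto (fun s => (log (V / s))⁻¹) (𝓝[>] 0) (𝓝 0) :=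
  tendsto_inv_atTop_zero.comp <| tendsto_log_atTop.comp <|
    tendsto_inv_nhdsGT_zero.const_mul_atTop hV

theorem hasDerivAt_inv_log_const_div {V s : ℝ} (hV : 0 < V) (hs : 0 < s) (hsV : s ≠ V) :
    HasDerivAt (fun s => (log (V / s))⁻¹) (s * log (V / s) ^ 2)⁻¹ s := by
  have hlog : log (V / s) ≠ 0 :=
    log_ne_zero_of_pos_of_ne_one (div_pos hV hs) ((div_eq_one_iff_eq hs.ne').not.2 hsV.symm)
  refine ((((hasDerivAt_inv hs.ne').const_mul V).log (by positivity)).inv hlog).congr_deriv ?_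
  field_simp

/-- At `s = 0` the junk values `V / 0 = 0`, `log 0 = 0`, `0⁻¹ = 0` give exactly the right-hand
limit `0`. -/
theorem continuousOn_inv_log_const_div {V t : ℝ} (hV : 0 < V) (htV : t < V) :
    ContinuousOn (fun s => (log (V / s))⁻¹) (Icc 0 t) := by
  intro s hs
  rcases hs.1.eq_or_lt with rfl | hs0
  · rcases hs.2.eq_or_lt with rfl | h0t
    · exact continuousWithinAt_singleton.mono (by simp)
    rw [continuousWithinAt_Icc_iff_Ici h0t, ← continuousWithinAt_Ioi_iff_Ici]
    simpa [ContinuousWithinAt] using tendsto_inv_log_const_div_nhdsGT_zero hV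
  · exact (hasDerivAt_inv_log_const_div hV hs0 (hs.2.trans_lt htV).ne).continuousAt
      |>.continuousWithinAt

theorem integrableOn_inv_mul_log_const_div_sq {V t : ℝ} (htV : t < V) :
    IntegrableOn (fun s => (s * log (V / s) ^ 2)⁻¹) (Ioc 0 t) := by
  rcases le_or_gt t 0 with ht | ht
  · simp [Ioc_eq_empty_of_le ht]
  exact intervalIntegral.integrableOn_deriv_of_nonneg
    (continuousOn_inv_log_const_div (ht.trans htV) htV)
    (fun s hs => hasDerivAt_inv_log_const_div (ht.trans htV) hs.1 (hs.2.trans htV).ne)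
    fun s hs => inv_nonneg.2 (mul_nonneg hs.1.le (sq_nonneg _))

theorem integral_inv_mul_log_const_div_sq {V t : ℝ} (ht : 0 ≤ t) (htV : t < V) :
    ∫ s in Ioc 0 t, (s * log (V / s) ^ 2)⁻¹ = (log (V / t))⁻¹ := by
  have hV : 0 < V := ht.trans_lt htV
  rw [← intervalIntegral.integral_of_le ht,
    intervalIntegral.integral_eq_sub_of_hasDerivAt_of_le ht (continuousOn_inv_log_const_div hV htV)
      (fun s hs => hasDerivAt_inv_log_const_div hV hs.1 (hs.2.trans htV).ne)
      ((intervalIntegrable_iff_integrableOn_Ioc_of_le ht).2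
        (integrableOn_inv_mul_log_const_div_sq htV))]
  simp

end Real

theorem log_div_mul_setIntegral_Ioc_le {g : ℝ → ℝ} {V t M : ℝ} (ht : 0 < t) (htV : t < V)
    (hg : ∀ s ∈ Ioc 0 t, 0 ≤ g s) (hM : ∀ s ∈ Ioc 0 t, s * Real.log (V / s) ^ 2 * g s ≤ M) :
    Real.log (V / t) * ∫ s in Ioc 0 t, g s ≤ M := by
  have hlog : 0 < Real.log (V / t) := Real.log_pos ((one_lt_div ht).2 htV)
  have hbound : ∀ s ∈ Ioc 0 t, g s ≤ M * (s * Real.log (V / s) ^ 2)⁻¹ := by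
    intro s hs
    have hpos : 0 < s * Real.log (V / s) ^ 2 :=
      mul_pos hs.1 (pow_pos (Real.log_pos ((one_lt_div hs.1).2 (hs.2.trans_lt htV))) 2)
    rw [← div_eq_mul_inv, le_div_iff₀ hpos, mul_comm]
    exact hM s hs
  -- `integral_mono_of_nonneg` needs no integrability of `g`: otherwise its integral is `0`.
  have hint : ∫ s in Ioc 0 t, g s ≤ ∫ s in Ioc 0 t, M * (s * Real.log (V / s) ^ 2)⁻¹ :=
    integral_mono_of_nonneg (ae_restrict_of_forall_mem measurableSet_Ioc hg)
      ((Real.integrableOn_inv_mul_log_const_div_sq htV).const_mul M)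
      (ae_restrict_of_forall_mem measurableSet_Ioc hbound)
  calc Real.log (V / t) * ∫ s in Ioc 0 t, g s
      ≤ Real.log (V / t) * ∫ s in Ioc 0 t, M * (s * Real.log (V / s) ^ 2)⁻¹ :=
        mul_le_mul_of_nonneg_left hint hlog.le
    _ = M := by
      rw [integral_const_mul, Real.integral_inv_mul_log_const_div_sq ht.le htV]
      field_simp

theorem MlogL_le_LorentzZygmund_general (N : ℕ)
    (Ω : Set (EuclideanSpace ℝ (Fin N)))
    (f : EuclideanSpace ℝ (Fin N) → ℝ) (M : ℝ)
    (hM : ∀ t : ℝ, 0 < t → t < (volume Ω).toReal →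
      t * Real.log ((volume Ω).toReal / t) ^ 2 * decRearr (volume.restrict Ω) f t ≤ M) :
    ∀ t : ℝ, 0 < t → t < (volume Ω).toReal →
      t * Real.log ((volume Ω).toReal / t) *
          ((1 / t) * ∫ s in Ioc (0 : ℝ) t, decRearr (volume.restrict Ω) f s) ≤ M := by
  intro t ht htV
  have h := log_div_mul_setIntegral_Ioc_le ht htV (fun s _ => decRearr_nonneg _ f s)
    fun s hs => hM s hs.1 (hs.2.trans_lt htV)
  calc _ = Real.log ((volume Ω).toReal / t) *
        ∫ s in Ioc (0 : ℝ) t, decRearr (volume.restrict Ω) f s := by field_simp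
    _ ≤ M := h

/-- For `Ω ⊂ ℝ^N` bounded measurable and `f : Ω → ℝ` measurable,
`sup_{0<t<|Ω|} t log(|Ω|/t) f**(t) ≤ sup_{0<t<|Ω|} t (log(|Ω|/t))² f*(t)`
(formulated as: every upper bound of the right-hand family bounds the left-hand family). -/
theorem MlogL_le_LorentzZygmund (N : ℕ) (hN : 1 ≤ N)
    (Ω : Set (EuclideanSpace ℝ (Fin N))) (hΩ : MeasurableSet Ω)
    (hb : Bornology.IsBounded Ω)
    (f : EuclideanSpace ℝ (Fin N) → ℝ) (hf : Measurable f) (M : ℝ)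
    (hM : ∀ t : ℝ, 0 < t → t < (volume Ω).toReal →
      t * Real.log ((volume Ω).toReal / t) ^ 2 * decRearr (volume.restrict Ω) f t ≤ M) :
    ∀ t : ℝ, 0 < t → t < (volume Ω).toReal →
      t * Real.log ((volume Ω).toReal / t) *
          ((1 / t) * ∫ s in Ioc (0 : ℝ) t, decRearr (volume.restrict Ω) f s) ≤ M :=
  MlogL_le_LorentzZygmund_general N Ω f M hM
end
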